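/- arXiv:2008.05272 — 8 statements merged into one kernel-verified Lean document; each statement's English description precedes it below -/
import Mathlib

section
/- For every graph G and every integer k with 2 ≤ k ≤ |V(G)|, there is a spanning k-partite subgraph H of G such that λ(H) ≥ ⌈(k-1)/k · λ(G)⌉, where λ denotes edge-connectivity. -/
/-!
Colour the vertices by the cyclic group `Fin k` so as to maximise the number of bichromatic
edges, and let `H` keep exactly those edges. For a cut `X`, adding a constant `t` to the colours
on `X` cannot increase that number. Edges not crossing `X` keep their status under every shift,
while a crossing edge is bichromatic for all but one of the `k` shifts, so averaging over `t`
gives `(k - 1) d_G(X) ≤ k d_H(X)`; minimising over `X` gives `(k - 1) λ(G) ≤ k λ(H)`.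
-/

/-- `d_G(X)`: the number of edges of `G` with exactly one endpoint in `X`
(counted via ordered pairs `(u,v)` with `u ∈ X`, `v ∉ X`). -/
noncomputable def cutCard {V : Type*} (G : SimpleGraph V) (X : Set V) : ℕ :=
  {p : V × V | G.Adj p.1 p.2 ∧ p.1 ∈ X ∧ p.2 ∉ X}.ncard

/-- The edge-connectivity `λ(G)`: the minimum of `d_G(X)` over nonempty proper `X`. -/
noncomputable def edgeConn {V : Type*} (G : SimpleGraph V) : ℕ :=
  sInf {n : ℕ | ∃ X : Set V, X.Nonempty ∧ X ≠ Set.univ ∧ cutCard G X = n}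

open Finset

namespace SimpleGraph

variable {V A : Type*}

def partiteSubgraph (G : SimpleGraph V) (P : V → A) : SimpleGraph V where
  Adj u v := G.Adj u v ∧ P u ≠ P v
  symm := ⟨fun _ _ h => ⟨h.1.symm, h.2.symm⟩⟩
  loopless := ⟨fun u h => G.loopless.irrefl u h.1⟩

@[simp]
lemma partiteSubgraph_adj {G : SimpleGraph V} {P : V → A} {u v : V} :
    (G.partiteSubgraph P).Adj u v ↔ G.Adj u v ∧ P u ≠ P v :=
  Iff.rfl

lemma cutCard_compl (G : SimpleGraph V) (X : Set V) : cutCard G Xᶜ = cutCard G X := by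
  rw [cutCard, cutCard, ← Set.ncard_image_of_injective _ Prod.swap_injective,
    Set.image_swap_eq_preimage_swap]
  congr 1
  ext ⟨u, v⟩
  simp only [Set.mem_preimage, Prod.swap_prod_mk, Set.mem_ofPred_eq, Set.mem_compl_iff, not_not]
  exact ⟨fun ⟨h, hu, hv⟩ => ⟨h.symm, hv, hu⟩, fun ⟨h, hv, hu⟩ => ⟨h.symm, hu, hv⟩⟩

lemma mul_edgeConn_le_of_forall_cutCard_le {G H : SimpleGraph V} {a b : ℕ}
    (h : ∀ X, a * cutCard G X ≤ b * cutCard H X) : a * edgeConn G ≤ b * edgeConn H := by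
  by_cases hproper : ∃ X : Set V, X.Nonempty ∧ X ≠ Set.univ
  · obtain ⟨X, hX, hXu, hXH⟩ : edgeConn H ∈
        {n | ∃ X : Set V, X.Nonempty ∧ X ≠ Set.univ ∧ cutCard H X = n} := by
      obtain ⟨X, hX, hXu⟩ := hproper
      exact Nat.sInf_mem ⟨_, X, hX, hXu, rfl⟩
    calc a * edgeConn G ≤ a * cutCard G X := Nat.mul_le_mul_left _ (Nat.sInf_le ⟨X, hX, hXu, rfl⟩)
      _ ≤ b * cutCard H X := h X
      _ = b * edgeConn H := by rw [hXH]
  · have hzero (K : SimpleGraph V) : edgeConn K = 0 := by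
      have hempty : {n | ∃ X : Set V, X.Nonempty ∧ X ≠ Set.univ ∧ cutCard K X = n} = ∅ :=
        Set.eq_empty_of_forall_notMem fun _ ⟨X, hX, hXu, _⟩ => hproper ⟨X, hX, hXu⟩
      rw [edgeConn, hempty, Nat.sInf_empty]
    simp [hzero]

section Shift

open scoped Classical

variable [AddGroup A]

noncomputable def shiftOn (P : V → A) (X : Set V) (t : A) (v : V) : A :=
  if v ∈ X then P v + t else P v

lemma shiftOn_ne_shiftOn_iff_of_iff {P : V → A} {X : Set V} {u v : V} (h : u ∈ X ↔ v ∈ X)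
    (t : A) : shiftOn P X t u ≠ shiftOn P X t v ↔ P u ≠ P v := by
  by_cases hu : u ∈ X
  · simp [shiftOn, hu, h.1 hu]
  · simp [shiftOn, hu, mt h.2 hu]

lemma card_shiftOn_ne_of_not_iff [Fintype A] {P : V → A} {X : Set V} {u v : V}
    (h : ¬(u ∈ X ↔ v ∈ X)) :
    #{t | shiftOn P X t u ≠ shiftOn P X t v} = Fintype.card A - 1 := by
  obtain ⟨c, hc⟩ : ∃ c, ∀ t, shiftOn P X t u ≠ shiftOn P X t v ↔ t ≠ c := by
    by_cases hu : u ∈ X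
    · have hv : v ∉ X := by tauto
      exact ⟨-P u + P v, fun t => by simp [shiftOn, hu, hv, eq_neg_add_iff_add_eq]⟩
    · have hv : v ∈ X := by tauto
      exact ⟨-P v + P u, fun t => by simp [shiftOn, hu, hv, eq_neg_add_iff_add_eq, eq_comm]⟩
  simp_rw [hc, filter_ne', card_erase_of_mem (mem_univ c), card_univ]

end Shift

section Counting

open scoped Classical

variable [Fintype V]

lemma cutCard_eq_card (G : SimpleGraph V) (X : Set V) :
    cutCard G X = #{p : V × V | G.Adj p.1 p.2 ∧ p.1 ∈ X ∧ p.2 ∉ X} := by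
  rw [cutCard, ← Set.ncard_coe_finset]
  simp

lemma card_crossing_eq_two_mul_cutCard (G : SimpleGraph V) (X : Set V) :
    #{p : V × V | G.Adj p.1 p.2 ∧ ¬(p.1 ∈ X ↔ p.2 ∈ X)} = 2 * cutCard G X := by
  rw [two_mul]
  nth_rw 2 [← cutCard_compl]
  rw [cutCard_eq_card, cutCard_eq_card, ← card_filter_add_card_filter_not (fun p => p.1 ∈ X),
    filter_filter, filter_filter]
  congr 2 <;> ext p <;> (simp only [mem_filter, mem_univ, true_and, Set.mem_compl_iff]; tauto)

/-- Ordered pairs are counted, so this is twice the number of edges of `G.partiteSubgraph Q`. -/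
noncomputable def bichromaticCount (G : SimpleGraph V) (Q : V → A) : ℕ :=
  #{p : V × V | G.Adj p.1 p.2 ∧ Q p.1 ≠ Q p.2}

variable [AddGroup A] [Fintype A]

lemma sum_bichromaticCount_shiftOn (G : SimpleGraph V) (P : V → A) (X : Set V) :
    ∑ t, G.bichromaticCount (shiftOn P X t) =
      Fintype.card A * #{p : V × V | G.Adj p.1 p.2 ∧ (p.1 ∈ X ↔ p.2 ∈ X) ∧ P p.1 ≠ P p.2} +
      (Fintype.card A - 1) * #{p : V × V | G.Adj p.1 p.2 ∧ ¬(p.1 ∈ X ↔ p.2 ∈ X)} := by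
  set E : Finset (V × V) := {p | G.Adj p.1 p.2}
  have hswap : ∑ t, G.bichromaticCount (shiftOn P X t) =
      ∑ p ∈ E, #{t | shiftOn P X t p.1 ≠ shiftOn P X t p.2} := by
    simp_rw [bichromaticCount, ← filter_filter, card_filter]
    exact sum_comm
  rw [hswap, ← sum_filter_add_sum_filter_not E (fun p => p.1 ∈ X ↔ p.2 ∈ X), ← filter_filter,
    ← filter_filter, ← filter_filter]
  congr 1
  · rw [card_filter, mul_sum]
    refine sum_congr rfl fun p hp => ?_
    simp_rw [shiftOn_ne_shiftOn_iff_of_iff (mem_filter.1 hp).2]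
    by_cases h : P p.1 ≠ P p.2 <;> simp [h]
  · rw [card_eq_sum_ones, mul_sum]
    refine sum_congr rfl fun p hp => ?_
    rw [card_shiftOn_ne_of_not_iff (mem_filter.1 hp).2, mul_one]

lemma sub_one_mul_cutCard_le (G : SimpleGraph V) {P : V → A}
    (hP : ∀ Q : V → A, G.bichromaticCount Q ≤ G.bichromaticCount P) (X : Set V) :
    (Fintype.card A - 1) * cutCard G X ≤ Fintype.card A * cutCard (G.partiteSubgraph P) X := by
  have haverage : ∑ t, G.bichromaticCount (shiftOn P X t) ≤
      Fintype.card A * G.bichromaticCount P := by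
    calc ∑ t, G.bichromaticCount (shiftOn P X t) ≤ ∑ _t : A, G.bichromaticCount P :=
          sum_le_sum fun t _ => hP (shiftOn P X t)
      _ = Fintype.card A * G.bichromaticCount P := by rw [sum_const, card_univ, smul_eq_mul]
  have hsplit : G.bichromaticCount P =
      #{p : V × V | G.Adj p.1 p.2 ∧ (p.1 ∈ X ↔ p.2 ∈ X) ∧ P p.1 ≠ P p.2} +
      #{p : V × V | (G.partiteSubgraph P).Adj p.1 p.2 ∧ ¬(p.1 ∈ X ↔ p.2 ∈ X)} := by
    rw [bichromaticCount, ← card_filter_add_card_filter_not (fun p : V × V => p.1 ∈ X ↔ p.2 ∈ X)]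
    congr 2 <;> ext p <;> simp only [mem_filter, mem_univ, true_and, partiteSubgraph_adj]
    tauto
  rw [sum_bichromaticCount_shiftOn, hsplit, card_crossing_eq_two_mul_cutCard,
    card_crossing_eq_two_mul_cutCard] at haverage
  nlinarith

end Counting

end SimpleGraph

theorem stmt3_general {V : Type*} [Fintype V] (G : SimpleGraph V) (k : ℕ)
    (hk2 : 2 ≤ k) :
    ∃ H : SimpleGraph V, H ≤ G ∧
      (∃ P : V → Fin k, ∀ u v, H.Adj u v → P u ≠ P v) ∧
      ⌈((k - 1 : ℚ) / k) * (edgeConn G : ℚ)⌉ ≤ (edgeConn H : ℤ) := by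
  have : NeZero k := ⟨by omega⟩
  obtain ⟨P, hP⟩ := Finite.exists_max (G.bichromaticCount : (V → Fin k) → ℕ)
  refine ⟨G.partiteSubgraph P, fun _ _ h => h.1, ⟨P, fun _ _ h => h.2⟩, ?_⟩
  have hconn : (k - 1) * edgeConn G ≤ k * edgeConn (G.partiteSubgraph P) := by
    simpa using SimpleGraph.mul_edgeConn_le_of_forall_cutCard_le (G.sub_one_mul_cutCard_le hP)
  have hconnℚ : ((k - 1 : ℕ) * edgeConn G : ℚ) ≤ k * edgeConn (G.partiteSubgraph P) := by
    exact_mod_cast hconn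
  rw [Nat.cast_sub (by omega), Nat.cast_one] at hconnℚ
  rw [Int.ceil_le, div_mul_eq_mul_div, div_le_iff₀ (by positivity)]
  push_cast
  linarith

/-- For every graph `G` and every `2 ≤ k ≤ |V(G)|` there is a spanning `k`-partite
subgraph `H` of `G` with `λ(H) ≥ ⌈(k-1)/k · λ(G)⌉`. -/
theorem stmt3 {V : Type*} [Fintype V] (G : SimpleGraph V) (k : ℕ)
    (hk2 : 2 ≤ k) (hkn : k ≤ Fintype.card V) :
    ∃ H : SimpleGraph V, H ≤ G ∧
      (∃ P : V → Fin k, ∀ u v, H.Adj u v → P u ≠ P v) ∧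
      ⌈((k - 1 : ℚ) / k) * (edgeConn G : ℚ)⌉ ≤ (edgeConn H : ℤ) :=
  stmt3_general G k hk2
end

section
/- If (V1,...,Vk) is a k-partition of the vertex set of a graph G maximizing the number of crossing edges, then for every nonempty proper subset X of V, the number of edges of G[V1,...,Vk] leaving X is at least ⌈(k-1)/k · d_G(X)⌉. -/
/-- cards of filters agree whenever the predicates agree, regardless of
decidability instances. -/
theorem fcc_aux {α : Type*} (s : Finset α) (q r : α → Prop)
    (i1 : DecidablePred q) (i2 : DecidablePred r) (h : ∀ x ∈ s, q x ↔ r x) :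
    (@Finset.filter _ q i1 s).card = (@Finset.filter _ r i2 s).card := by
  congr 1
  ext x
  simp only [Finset.mem_filter]
  exact and_congr_right fun hx => h x hx

/-- If `(V_1,…,V_k)` (encoded by `P : V → Fin k`) is a `k`-partition of the vertex
set of `G` maximizing the number of crossing edges, then for every nonempty proper
subset `X` the number of edges of `G[V_1,…,V_k]` leaving `X` is at least
`⌈(k-1)/k · d_G(X)⌉`. -/
theorem stmt4 {V : Type*} [Fintype V] (G : SimpleGraph V) (k : ℕ) (hk : 2 ≤ k)
    (P : V → Fin k)
    (hmax : ∀ Q : V → Fin k,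
      {p : V × V | G.Adj p.1 p.2 ∧ Q p.1 ≠ Q p.2}.ncard ≤
        {p : V × V | G.Adj p.1 p.2 ∧ P p.1 ≠ P p.2}.ncard)
    (X : Set V) (hX : X.Nonempty) (hXp : X ≠ Set.univ) :
    ⌈((k - 1 : ℚ) / k) *
        ({p : V × V | G.Adj p.1 p.2 ∧ p.1 ∈ X ∧ p.2 ∉ X}.ncard : ℚ)⌉
      ≤ ({p : V × V | G.Adj p.1 p.2 ∧ P p.1 ≠ P p.2 ∧ p.1 ∈ X ∧ p.2 ∉ X}.ncard : ℤ) := by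
  classical
  obtain ⟨m, rfl⟩ : ∃ m, k = m + 1 := ⟨k - 1, by omega⟩
  -- translate ncard to filter cards
  have hn : ∀ q : V × V → Prop, {p : V × V | q p}.ncard = (Finset.univ.filter q).card := by
    intro q
    rw [Set.ncard_eq_toFinset_card']
    simp [Set.toFinset_setOf]
  -- good + bad = boundary
  have hgb : ∀ c : Fin (m+1),
      (Finset.univ.filter (fun p : V × V =>
        G.Adj p.1 p.2 ∧ p.1 ∈ X ∧ p.2 ∉ X ∧ P p.1 + c ≠ P p.2)).card
      + (Finset.univ.filter (fun p : V × V =>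
        G.Adj p.1 p.2 ∧ p.1 ∈ X ∧ p.2 ∉ X ∧ P p.1 + c = P p.2)).card
      = (Finset.univ.filter (fun p : V × V =>
        G.Adj p.1 p.2 ∧ p.1 ∈ X ∧ p.2 ∉ X)).card := by
    intro c
    rw [← Finset.card_union_of_disjoint (by
      rw [Finset.disjoint_left]
      intro p hp hq
      simp only [Finset.mem_filter, Finset.mem_univ, true_and] at hp hq
      exact hp.2.2.2 hq.2.2.2)]
    congr 1
    ext p
    simp only [Finset.mem_union, Finset.mem_filter, Finset.mem_univ, true_and]
    by_cases h : P p.1 + c = P p.2 <;> tauto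
  -- sum of bad over all shifts is the whole boundary
  have hsum : ∑ c : Fin (m+1), (Finset.univ.filter (fun p : V × V =>
        G.Adj p.1 p.2 ∧ p.1 ∈ X ∧ p.2 ∉ X ∧ P p.1 + c = P p.2)).card
      = (Finset.univ.filter (fun p : V × V =>
        G.Adj p.1 p.2 ∧ p.1 ∈ X ∧ p.2 ∉ X)).card := by
    have h := Finset.card_eq_sum_card_fiberwise
      (s := Finset.univ.filter (fun p : V × V => G.Adj p.1 p.2 ∧ p.1 ∈ X ∧ p.2 ∉ X))
      (t := Finset.univ) (f := fun p : V × V => P p.2 - P p.1)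
      (fun x _ => Finset.mem_univ _)
    rw [h]
    refine Finset.sum_congr rfl fun c _ => ?_
    rw [Finset.filter_filter]
    refine fcc_aux _ _ _ _ _ fun p _ => ?_
    constructor
    · rintro ⟨h1, h2, h3, h4⟩
      exact ⟨⟨h1, h2, h3⟩, sub_eq_iff_eq_add'.mpr h4.symm⟩
    · rintro ⟨⟨h1, h2, h3⟩, h4⟩
      exact ⟨h1, h2, h3, (sub_eq_iff_eq_add'.mp h4).symm⟩
  -- shifted partition
  have key : ∀ c : Fin (m+1),
      (Finset.univ.filter (fun p : V × V => G.Adj p.1 p.2 ∧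
        (if p.1 ∈ X then P p.1 + c else P p.1) ≠ (if p.2 ∈ X then P p.2 + c else P p.2))).card
      = (Finset.univ.filter (fun p : V × V =>
          (G.Adj p.1 p.2 ∧ P p.1 ≠ P p.2) ∧ (p.1 ∈ X ↔ p.2 ∈ X))).card
        + 2 * (Finset.univ.filter (fun p : V × V =>
          G.Adj p.1 p.2 ∧ p.1 ∈ X ∧ p.2 ∉ X ∧ P p.1 + c ≠ P p.2)).card := by
    intro c
    -- split the crossing set into three disjoint pieces
    have hu : (Finset.univ.filter (fun p : V × V => G.Adj p.1 p.2 ∧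
        (if p.1 ∈ X then P p.1 + c else P p.1) ≠ (if p.2 ∈ X then P p.2 + c else P p.2)))
        = (Finset.univ.filter (fun p : V × V =>
            (G.Adj p.1 p.2 ∧ P p.1 ≠ P p.2) ∧ (p.1 ∈ X ↔ p.2 ∈ X)))
          ∪ ((Finset.univ.filter (fun p : V × V =>
            G.Adj p.1 p.2 ∧ p.1 ∈ X ∧ p.2 ∉ X ∧ P p.1 + c ≠ P p.2))
          ∪ (Finset.univ.filter (fun p : V × V =>
            G.Adj p.1 p.2 ∧ p.1 ∉ X ∧ p.2 ∈ X ∧ P p.1 ≠ P p.2 + c))) := by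
      ext p
      simp only [Finset.mem_union, Finset.mem_filter, Finset.mem_univ, true_and]
      by_cases h1 : p.1 ∈ X <;> by_cases h2 : p.2 ∈ X <;>
        simp only [h1, h2, if_pos, if_neg, if_true, if_false, not_true, not_false_iff,
          iff_true, iff_false, true_iff, false_iff] <;>
        [skip; skip; skip; skip]
      · have : P p.1 + c ≠ P p.2 + c ↔ P p.1 ≠ P p.2 := by
          constructor
          · intro h he; exact h (by rw [he])
          · intro h he; exact h (add_right_cancel he)
        tauto
      · tauto
      · tauto
      · tauto
    rw [hu, Finset.card_union_of_disjoint, Finset.card_union_of_disjoint]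
    · have hsw : (Finset.univ.filter (fun p : V × V =>
            G.Adj p.1 p.2 ∧ p.1 ∉ X ∧ p.2 ∈ X ∧ P p.1 ≠ P p.2 + c)).card
          = (Finset.univ.filter (fun p : V × V =>
            G.Adj p.1 p.2 ∧ p.1 ∈ X ∧ p.2 ∉ X ∧ P p.1 + c ≠ P p.2)).card := by
        apply Finset.card_bij' (fun p _ => Prod.swap p) (fun p _ => Prod.swap p)
        · intro p hp
          simp only [Finset.mem_filter, Finset.mem_univ, true_and, Prod.fst_swap,
            Prod.snd_swap] at hp ⊢
          exact ⟨hp.1.symm, hp.2.2.1, hp.2.1, fun h => hp.2.2.2 h.symm⟩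
        · intro p hp
          simp only [Finset.mem_filter, Finset.mem_univ, true_and, Prod.fst_swap,
            Prod.snd_swap] at hp ⊢
          exact ⟨hp.1.symm, hp.2.2.1, hp.2.1, fun h => hp.2.2.2 h.symm⟩
        · intro p _; simp
        · intro p _; simp
      rw [hsw]; ring
    · rw [Finset.disjoint_left]
      intro p hp hq
      simp only [Finset.mem_filter, Finset.mem_univ, true_and] at hp hq
      exact hq.2.1 hp.2.1
    · rw [Finset.disjoint_left]
      intro p hp hq
      simp only [Finset.mem_union, Finset.mem_filter, Finset.mem_univ, true_and] at hp hq
      rcases hq with hq | hq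
      · exact hq.2.2.1 (hp.2.mp hq.2.1)
      · exact hq.2.1 (hp.2.mpr hq.2.2.1)
  -- the count for P itself
  have keyP :
      (Finset.univ.filter (fun p : V × V => G.Adj p.1 p.2 ∧ P p.1 ≠ P p.2)).card
      = (Finset.univ.filter (fun p : V × V =>
          (G.Adj p.1 p.2 ∧ P p.1 ≠ P p.2) ∧ (p.1 ∈ X ↔ p.2 ∈ X))).card
        + 2 * (Finset.univ.filter (fun p : V × V =>
          G.Adj p.1 p.2 ∧ p.1 ∈ X ∧ p.2 ∉ X ∧ P p.1 + (0 : Fin (m+1)) ≠ P p.2)).card := by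
    rw [← key 0]
    refine fcc_aux _ _ _ _ _ fun p _ => ?_
    simp [add_zero]
  -- maximality
  have hmax' : ∀ c : Fin (m+1),
      (Finset.univ.filter (fun p : V × V =>
        G.Adj p.1 p.2 ∧ p.1 ∈ X ∧ p.2 ∉ X ∧ P p.1 + c ≠ P p.2)).card
      ≤ (Finset.univ.filter (fun p : V × V =>
        G.Adj p.1 p.2 ∧ p.1 ∈ X ∧ p.2 ∉ X ∧ P p.1 + (0 : Fin (m+1)) ≠ P p.2)).card := by
    intro c
    have h := hmax (fun v => if v ∈ X then P v + c else P v)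
    rw [hn, hn] at h
    have h2 : (Finset.univ.filter (fun p : V × V => G.Adj p.1 p.2 ∧
        (if p.1 ∈ X then P p.1 + c else P p.1) ≠ (if p.2 ∈ X then P p.2 + c else P p.2))).card
        ≤ (Finset.univ.filter (fun p : V × V => G.Adj p.1 p.2 ∧ P p.1 ≠ P p.2)).card := by
      calc _ = _ := fcc_aux _ _ _ _ _ (fun p _ => Iff.rfl)
        _ ≤ _ := h
        _ = _ := fcc_aux _ _ _ _ _ (fun p _ => Iff.rfl)
    rw [key c, keyP] at h2
    omega
  -- bad at 0 is the smallest
  have hb0 : ∀ c : Fin (m+1),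
      (Finset.univ.filter (fun p : V × V =>
        G.Adj p.1 p.2 ∧ p.1 ∈ X ∧ p.2 ∉ X ∧ P p.1 + (0 : Fin (m+1)) = P p.2)).card
      ≤ (Finset.univ.filter (fun p : V × V =>
        G.Adj p.1 p.2 ∧ p.1 ∈ X ∧ p.2 ∉ X ∧ P p.1 + c = P p.2)).card := by
    intro c
    have h1 := hgb c
    have h2 := hgb 0
    have h3 := hmax' c
    omega
  have hkb : (m + 1) * (Finset.univ.filter (fun p : V × V =>
        G.Adj p.1 p.2 ∧ p.1 ∈ X ∧ p.2 ∉ X ∧ P p.1 + (0 : Fin (m+1)) = P p.2)).card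
      ≤ (Finset.univ.filter (fun p : V × V =>
        G.Adj p.1 p.2 ∧ p.1 ∈ X ∧ p.2 ∉ X)).card := by
    calc (m + 1) * _ = ∑ _c : Fin (m+1), (Finset.univ.filter (fun p : V × V =>
          G.Adj p.1 p.2 ∧ p.1 ∈ X ∧ p.2 ∉ X ∧ P p.1 + (0 : Fin (m+1)) = P p.2)).card := by
          simp [Finset.sum_const, Finset.card_univ, mul_comm]
      _ ≤ ∑ c : Fin (m+1), (Finset.univ.filter (fun p : V × V =>
          G.Adj p.1 p.2 ∧ p.1 ∈ X ∧ p.2 ∉ X ∧ P p.1 + c = P p.2)).card :=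
          Finset.sum_le_sum (fun c _ => hb0 c)
      _ = _ := hsum
  -- rewrite the goal
  have hgoal1 : {p : V × V | G.Adj p.1 p.2 ∧ p.1 ∈ X ∧ p.2 ∉ X}.ncard
      = (Finset.univ.filter (fun p : V × V =>
        G.Adj p.1 p.2 ∧ p.1 ∈ X ∧ p.2 ∉ X)).card := by
    rw [hn]
    exact fcc_aux _ _ _ _ _ fun _ _ => Iff.rfl
  have hgoal2 : {p : V × V | G.Adj p.1 p.2 ∧ P p.1 ≠ P p.2 ∧ p.1 ∈ X ∧ p.2 ∉ X}.ncard
      = (Finset.univ.filter (fun p : V × V =>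
        G.Adj p.1 p.2 ∧ p.1 ∈ X ∧ p.2 ∉ X ∧ P p.1 + (0 : Fin (m+1)) ≠ P p.2)).card := by
    rw [hn]
    refine fcc_aux _ _ _ _ _ fun p _ => ?_
    simp only [add_zero]
    tauto
  rw [hgoal1, hgoal2, Int.ceil_le]
  have e0 := hgb 0
  set gcard := (Finset.univ.filter (fun p : V × V =>
    G.Adj p.1 p.2 ∧ p.1 ∈ X ∧ p.2 ∉ X ∧ P p.1 + (0 : Fin (m+1)) ≠ P p.2)).card
  set bcard := (Finset.univ.filter (fun p : V × V =>
    G.Adj p.1 p.2 ∧ p.1 ∈ X ∧ p.2 ∉ X ∧ P p.1 + (0 : Fin (m+1)) = P p.2)).card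
  set Fcard := (Finset.univ.filter (fun p : V × V =>
    G.Adj p.1 p.2 ∧ p.1 ∈ X ∧ p.2 ∉ X)).card
  have hq1 : (gcard : ℚ) + (bcard : ℚ) = (Fcard : ℚ) := by exact_mod_cast e0
  have hq2 : ((m : ℚ) + 1) * (bcard : ℚ) ≤ (Fcard : ℚ) := by exact_mod_cast hkb
  have hk0 : (0 : ℚ) < (m : ℚ) + 1 := by positivity
  push_cast
  rw [div_mul_eq_mul_div, div_le_iff₀ hk0]
  nlinarith [hq1, hq2]
end

section
/- Every graph G contains a spanning subgraph H with edge-connectivity λ(H) ≥ λ(G) and chromatic number χ(H) ≤ λ(G) + 1. -/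
/-!
Let `k = λ(G)` and let `H ≤ G` be minimal such that every cut of `H` still has at least `k`
edges. By minimality every edge `uv` of `H` crosses a tight cut, one with exactly `k` edges.
Given a vertex set `S`, pick a tight cut `X` meeting `S` in as few vertices as possible. If every
vertex of `S` had more than `k` neighbours in `S`, a vertex `u ∈ X ∩ S` would have a neighbour
`x ∈ X ∩ S`; uncrossing `X` with a tight cut separating `u` and `x` (by submodularity of the cut
function) gives a tight cut meeting `S` in fewer vertices. So `H` is `k`-degenerate, hence greedily
`(k + 1)`-colourable.
-/

open Set

section Cuts

variable {V : Type*} (G : SimpleGraph V)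

def cutSet (X : Set V) : Set (V × V) := {p | G.Adj p.1 p.2 ∧ p.1 ∈ X ∧ p.2 ∉ X}

theorem cutCard_eq_ncard_cutSet (X : Set V) : cutCard G X = (cutSet G X).ncard := rfl

theorem cutCard_compl (X : Set V) : cutCard G Xᶜ = cutCard G X := by
  have : cutSet G Xᶜ = Prod.swap '' cutSet G X := by
    rw [image_swap_eq_preimage_swap]
    ext ⟨a, b⟩
    simp only [cutSet, mem_ofPred_eq, mem_compl_iff, not_not, mem_preimage, Prod.swap]
    exact ⟨fun ⟨h, ha, hb⟩ => ⟨h.symm, hb, ha⟩, fun ⟨h, hb, ha⟩ => ⟨h.symm, ha, hb⟩⟩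
  rw [cutCard_eq_ncard_cutSet, cutCard_eq_ncard_cutSet, this,
    ncard_image_of_injective _ Prod.swap_injective]

variable {G} {u v : V} {X : Set V}

theorem cutCard_deleteEdges_of_mem_iff (h : u ∈ X ↔ v ∈ X) :
    cutCard (G.deleteEdges {s(u, v)}) X = cutCard G X := by
  simp only [cutCard_eq_ncard_cutSet]
  congr 1
  ext ⟨a, b⟩
  simp only [cutSet, SimpleGraph.deleteEdges_adj, mem_singleton_iff, Sym2.eq_iff,
    mem_ofPred_eq]
  constructor
  · tauto
  · rintro ⟨hab, ha, hb⟩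
    refine ⟨⟨hab, ?_⟩, ha, hb⟩
    rintro (⟨rfl, rfl⟩ | ⟨rfl, rfl⟩) <;> tauto

theorem cutCard_le_cutCard_deleteEdges_add_one [Finite V] (hu : u ∈ X) :
    cutCard G X ≤ cutCard (G.deleteEdges {s(u, v)}) X + 1 := by
  simp only [cutCard_eq_ncard_cutSet]
  refine (ncard_le_ncard ?_).trans (ncard_insert_le (u, v) _)
  rintro ⟨a, b⟩ ⟨hab, ha, hb⟩
  simp only [cutSet, mem_insert_iff, Prod.mk.injEq, SimpleGraph.deleteEdges_adj,
    mem_singleton_iff, Sym2.eq_iff, mem_ofPred_eq]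
  by_cases h : a = u ∧ b = v
  · exact Or.inl h
  · refine Or.inr ⟨⟨hab, ?_⟩, ha, hb⟩
    rintro (h' | ⟨rfl, rfl⟩)
    exacts [h h', hb hu]

variable (G) [Finite V]

theorem cutCard_inter_add_cutCard_union_le (X Y : Set V) :
    cutCard G (X ∩ Y) + cutCard G (X ∪ Y) ≤ cutCard G X + cutCard G Y := by
  -- The union and the intersection of the cut sets of `X ∩ Y` and `X ∪ Y` lie in the union and
  -- the intersection of those of `X` and `Y`.
  simp only [cutCard_eq_ncard_cutSet]
  rw [← ncard_union_add_ncard_inter (cutSet G (X ∩ Y)),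
    ← ncard_union_add_ncard_inter (cutSet G X)]
  apply add_le_add <;> refine ncard_le_ncard ?_ <;>
    · intro p
      simp only [cutSet, mem_union, mem_inter_iff, mem_ofPred_eq]
      tauto

theorem ncard_neighborSet_diff_le_cutCard (hu : u ∈ X) :
    (G.neighborSet u \ X).ncard ≤ cutCard G X :=
  ncard_le_ncard_of_injOn (fun w => (u, w)) (fun _ hw => ⟨hw.1, hu, hw.2⟩)
    (fun _ _ _ _ h => congrArg Prod.snd h)

end Cuts

section TightCuts

variable {V : Type*} (H : SimpleGraph V) (k : ℕ)

/-- The cut form of `k ≤ edgeConn H`; unlike it, this holds for every `k` when `V` has at most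
one vertex. -/
def CutsAtLeast : Prop := ∀ X : Set V, X.Nonempty → X ≠ univ → k ≤ cutCard H X

def IsTightCut (X : Set V) : Prop := X.Nonempty ∧ X ≠ univ ∧ cutCard H X = k

variable {H k}

theorem IsTightCut.compl {X : Set V} (hX : IsTightCut H k X) : IsTightCut H k Xᶜ :=
  ⟨nonempty_compl.2 hX.2.1, compl_ne_univ.2 hX.1, (cutCard_compl H X).trans hX.2.2⟩

theorem exists_isTightCut_of_minimal [Finite V] (hH : Minimal (CutsAtLeast · k) H) {u v : V}
    (huv : H.Adj u v) : ∃ X, IsTightCut H k X ∧ u ∈ X ∧ v ∉ X := by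
  have hlt : H.deleteEdges {s(u, v)} < H := (H.deleteEdges_le _).lt_of_ne fun h => by
    have : (H.deleteEdges {s(u, v)}).Adj u v := by rwa [h]
    simp at this
  have hdel : ¬ CutsAtLeast (H.deleteEdges {s(u, v)}) k := fun h => hlt.not_ge (hH.2 h hlt.le)
  simp only [CutsAtLeast, not_forall, not_le] at hdel
  obtain ⟨X, hX, hXu, hXk⟩ := hdel
  have key : ∀ Y : Set V, Y.Nonempty → Y ≠ univ → cutCard (H.deleteEdges {s(u, v)}) Y < k →
      u ∈ Y → IsTightCut H k Y ∧ u ∈ Y ∧ v ∉ Y := by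
    intro Y hY hYu hYk hu
    have hv : v ∉ Y := fun hv => (hH.1 Y hY hYu).not_gt <|
      cutCard_deleteEdges_of_mem_iff (iff_of_true hu hv) ▸ hYk
    have := cutCard_le_cutCard_deleteEdges_add_one (G := H) (v := v) hu
    have := hH.1 Y hY hYu
    exact ⟨⟨hY, hYu, by omega⟩, hu, hv⟩
  by_cases hu : u ∈ X
  · exact ⟨X, key X hX hXu hXk hu⟩
  · refine ⟨Xᶜ, key Xᶜ (nonempty_compl.2 hXu) (compl_ne_univ.2 hX) ?_ hu⟩
    rwa [cutCard_compl]

end TightCuts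

section Degeneracy

variable {V : Type*} {H : SimpleGraph V} {k : ℕ}

variable (H k) in
def IsDegenerate : Prop := ∀ s : Set V, s.Nonempty → ∃ v ∈ s, (H.neighborSet v ∩ s).ncard ≤ k

variable [Finite V]

/-- Uncrossing: if `X ∪ Y` is everything then `Yᶜ` works, and otherwise submodularity forces
`X ∩ Y` to be tight. -/
theorem CutsAtLeast.exists_isTightCut_subset (hH : CutsAtLeast H k) {X Y : Set V}
    (hX : IsTightCut H k X) (hY : IsTightCut H k Y) {x y : V} (hxX : x ∈ X) (hxY : x ∈ Y)
    (hyY : y ∉ Y) : ∃ Z ⊆ X, IsTightCut H k Z ∧ ¬(x ∈ Z ↔ y ∈ Z) := by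
  by_cases hU : X ∪ Y = univ
  · refine ⟨Yᶜ, fun a ha => ?_, hY.compl, by simp [hxY, hyY]⟩
    exact ((hU ▸ mem_univ a : a ∈ X ∪ Y)).resolve_right ha
  · have hne : X ∩ Y ≠ univ := (ne_univ_iff_exists_notMem _).2 ⟨y, fun h => hyY h.2⟩
    have := cutCard_inter_add_cutCard_union_le H X Y
    have := hH (X ∩ Y) ⟨x, hxX, hxY⟩ hne
    have := hH (X ∪ Y) ⟨x, Or.inl hxX⟩ hU
    refine ⟨X ∩ Y, inter_subset_left, ⟨⟨x, hxX, hxY⟩, hne, ?_⟩, by simp [hxX, hxY, hyY]⟩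
    rw [hX.2.2, hY.2.2] at *
    omega

theorem CutsAtLeast.isDegenerate (hH : CutsAtLeast H k)
    (htight : ∀ u v, H.Adj u v → ∃ X, IsTightCut H k X ∧ u ∈ X ∧ v ∉ X) :
    IsDegenerate H k := by
  intro s hs
  by_contra! hdeg
  obtain ⟨v, hv⟩ := hs
  obtain ⟨w, hvw, hw⟩ : (H.neighborSet v ∩ s).Nonempty :=
    nonempty_of_ncard_ne_zero (by grind)
  obtain ⟨X₀, hX₀, hvX₀, -⟩ := htight v w hvw
  obtain ⟨X, ⟨hX, u, huX, hus⟩, hXmin⟩ := exists_minimalFor_of_wellFoundedLT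
    (fun X => IsTightCut H k X ∧ (X ∩ s).Nonempty) (fun X => (X ∩ s).ncard)
    ⟨X₀, hX₀, v, hvX₀, hv⟩
  obtain ⟨x, hxX, hxs, hux⟩ : ∃ x ∈ X, x ∈ s ∧ H.Adj u x := by
    by_contra! hout
    have hsub : H.neighborSet u ∩ s ⊆ H.neighborSet u \ X :=
      fun w hw => ⟨hw.1, fun hwX => hout w hwX hw.2 hw.1⟩
    exact (hdeg u hus).not_ge <|
      hX.2.2 ▸ (ncard_le_ncard hsub).trans (ncard_neighborSet_diff_le_cutCard H huX)
  obtain ⟨Y, hY, huY, hxY⟩ := htight u x hux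
  obtain ⟨Z, hZX, hZ, hsep⟩ := hH.exists_isTightCut_subset hX hY huX huY hxY
  have hZs : (Z ∩ s).Nonempty := by
    by_cases huZ : u ∈ Z
    exacts [⟨u, huZ, hus⟩, ⟨x, by tauto, hxs⟩]
  have hlt : (Z ∩ s).ncard < (X ∩ s).ncard := by
    refine ncard_lt_ncard ⟨inter_subset_inter_left _ hZX, fun hsub => hsep ?_⟩
    exact ⟨fun _ => (hsub ⟨hxX, hxs⟩).1, fun _ => (hsub ⟨huX, hus⟩).1⟩
  exact hlt.not_ge (hXmin ⟨hZ, hZs⟩ hlt.le)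

theorem IsDegenerate.colorable (h : IsDegenerate H k) : H.Colorable (k + 1) := by
  classical
  have : Fintype V := Fintype.ofFinite V
  suffices hs : ∀ s : Finset V, ∃ c : V → Fin (k + 1), ∀ a ∈ s, ∀ b ∈ s, H.Adj a b → c a ≠ c b by
    obtain ⟨c, hc⟩ := hs Finset.univ
    exact ⟨SimpleGraph.Coloring.mk c fun hab => hc _ (Finset.mem_univ _) _ (Finset.mem_univ _) hab⟩
  intro s
  induction s using Finset.strongInduction with | H s ih => ?_
  rcases s.eq_empty_or_nonempty with rfl | hs
  · exact ⟨fun _ => 0, by simp⟩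
  obtain ⟨v, hv, hdeg⟩ := h s (by exact_mod_cast hs)
  obtain ⟨c, hc⟩ := ih (s.erase v) (Finset.erase_ssubset hv)
  obtain ⟨col, -, hcol⟩ := exists_mem_notMem_of_ncard_lt_ncard
    (s := c '' (H.neighborSet v ∩ s)) (t := univ)
    (by rw [ncard_univ, Nat.card_fin]; exact (ncard_image_le ..).trans_lt (by omega))
  have hfresh : ∀ w ∈ s, H.Adj v w → c w ≠ col := fun w hw hvw hcw => hcol ⟨w, ⟨hvw, hw⟩, hcw⟩
  refine ⟨Function.update c v col, fun a ha b hb hab => ?_⟩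
  by_cases hav : a = v <;> by_cases hbv : b = v
  · exact (H.loopless.irrefl v (by rwa [hav, hbv] at hab)).elim
  · subst hav
    simpa [Function.update_of_ne hbv] using (hfresh b hb hab).symm
  · subst hbv
    simpa [Function.update_of_ne hav] using hfresh a ha hab.symm
  · simpa [Function.update_of_ne hav, Function.update_of_ne hbv] using
      hc a (by simp [hav, ha]) b (by simp [hbv, hb]) hab

end Degeneracy

section EdgeConnectivity

variable {V : Type*} {G H : SimpleGraph V}

theorem cutsAtLeast_edgeConn (G : SimpleGraph V) : CutsAtLeast G (edgeConn G) :=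
  fun X hX hXu => Nat.sInf_le ⟨X, hX, hXu, rfl⟩

theorem CutsAtLeast.edgeConn_le_edgeConn (h : CutsAtLeast H (edgeConn G)) :
    edgeConn G ≤ edgeConn H := by
  by_cases hV : ∃ X : Set V, X.Nonempty ∧ X ≠ univ
  · obtain ⟨X, hX, hXu⟩ := hV
    exact le_csInf ⟨_, X, hX, hXu, rfl⟩ fun _ ⟨Y, hY, hYu, hYn⟩ => hYn ▸ h Y hY hYu
  · -- With at most one vertex there are no cuts, and `sInf ∅ = 0`.
    refine (Nat.sInf_eq_zero.2 (Or.inr ?_)).trans_le (Nat.zero_le _)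
    exact eq_empty_of_forall_notMem fun _ ⟨X, hX, hXu, _⟩ => hV ⟨X, hX, hXu⟩

end EdgeConnectivity

/-- Every graph `G` contains a spanning subgraph `H` with `λ(H) ≥ λ(G)` and
`χ(H) ≤ λ(G) + 1`. -/
theorem stmt7 {V : Type*} [Fintype V] (G : SimpleGraph V) :
    ∃ H : SimpleGraph V, H ≤ G ∧ edgeConn G ≤ edgeConn H ∧
      H.chromaticNumber ≤ (edgeConn G : ℕ∞) + 1 := by
  obtain ⟨H, hHG, hH⟩ :=
    exists_minimal_le_of_wellFoundedLT (CutsAtLeast · (edgeConn G)) G (cutsAtLeast_edgeConn G)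
  refine ⟨H, hHG, hH.1.edgeConn_le_edgeConn, ?_⟩
  have hcol := (hH.1.isDegenerate fun _ _ => exists_isTightCut_of_minimal hH).colorable
  exact_mod_cast hcol.chromaticNumber_le
end

section
/- Let G be the line graph of an essentially 6-edge-connected (3,5)-regular bipartite graph with b vertices of degree 3 and c vertices of degree 5 and n = 3b = 5c edges. Then every cut of G has at most (28/15)n edges; in particular, since 2(n-1) > (28/15)n for n ≥ 16, G has no spanning bipartite subgraph that decomposes into two edge-disjoint spanning trees. -/
lemma Nat.mul_le_sq_add_div_four (a b : ℕ) : a * b ≤ (a + b) ^ 2 / 4 :=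
  (Nat.le_div_iff_mul_le (by norm_num)).2 (by linarith [four_mul_le_sq_add a b])

lemma sum_sq_div_four_of_eq_three_or_eq_five {V : Type*} [Fintype V] (d : V → ℕ)
    (hd : ∀ v, d v = 3 ∨ d v = 5) :
    ∑ v, d v ^ 2 / 4 = 2 * {v | d v = 3}.ncard + 6 * {v | d v = 5}.ncard := by
  classical
  have hfive : {v | d v = 5} = {v | ¬d v = 3} := by
    ext v
    have := hd v
    simp only [Set.mem_ofPred_eq]
    omega
  rw [← Finset.sum_filter_add_sum_filter_not _ (d · = 3),
    Finset.sum_const_nat (m := 2) (by simp +contextual),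
    Finset.sum_const_nat (m := 6) fun v hv ↦ by grind, hfive,
    ← Set.ncard_coe_finset, ← Set.ncard_coe_finset]
  simp [mul_comm]

namespace SimpleGraph

variable {V : Type*} (G : SimpleGraph V)

def edgesAt (v : V) : Set G.edgeSet := {e | v ∈ (e : Sym2 V)}

lemma ncard_edgesAt (v : V) : (G.edgesAt v).ncard = (G.neighborSet v).ncard := by
  classical
  rw [← Set.ncard_image_of_injective _ Subtype.val_injective, ← Nat.card_coe_set_eq,
    ← Nat.card_coe_set_eq, ← Nat.card_congr (G.incidenceSetEquivNeighborSet v)]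
  congr
  ext e
  simp [edgesAt, incidenceSet, and_comm]

open Function in
lemma cutCard_lineGraph [Fintype V] (X : Set G.edgeSet) :
    cutCard G.lineGraph X = ∑ v, (G.edgesAt v ∩ X).ncard * (G.edgesAt v \ X).ncard := by
  have hcut : {p : G.edgeSet × G.edgeSet | G.lineGraph.Adj p.1 p.2 ∧ p.1 ∈ X ∧ p.2 ∉ X} =
      ⋃ v, (G.edgesAt v ∩ X) ×ˢ (G.edgesAt v \ X) := by
    ext ⟨e, f⟩
    simp only [lineGraph_adj_iff_exists, Set.mem_ofPred_eq, Set.mem_iUnion, Set.mem_prod,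
      Set.mem_inter_iff, Set.mem_sdiff, edgesAt]
    constructor
    · rintro ⟨⟨-, v, hve, hvf⟩, he, hf⟩
      exact ⟨v, ⟨hve, he⟩, hvf, hf⟩
    · rintro ⟨v, ⟨hve, he⟩, hvf, hf⟩
      exact ⟨⟨by rintro rfl; exact hf he, v, hve, hvf⟩, he, hf⟩
  have hdisj : Pairwise (Disjoint on fun v ↦ (G.edgesAt v ∩ X) ×ˢ (G.edgesAt v \ X)) := by
    intro u v huv
    refine Set.disjoint_left.mpr ?_
    rintro ⟨e, f⟩ ⟨⟨hue, he⟩, huf, -⟩ ⟨⟨hve, -⟩, hvf, hf⟩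
    exact hf (Subtype.ext (Sym2.eq_of_ne_mem huv hue hve huf hvf) ▸ he)
  rw [cutCard, hcut, Set.ncard_iUnion_of_finite (fun _ ↦ Set.toFinite _) hdisj]
  simp only [Set.ncard_prod, finsum_eq_sum_of_fintype]

lemma cutCard_lineGraph_le [Fintype V] (X : Set G.edgeSet) :
    cutCard G.lineGraph X ≤ ∑ v, (G.neighborSet v).ncard ^ 2 / 4 := by
  rw [cutCard_lineGraph]
  refine Finset.sum_le_sum fun v _ ↦ ?_
  rw [← ncard_edgesAt, ← Set.ncard_inter_add_ncard_sdiff_eq_ncard (G.edgesAt v) X]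
  exact Nat.mul_le_sq_add_div_four _ _

lemma ncard_union_edgeSet_of_isTree [Finite V] {T₁ T₂ : SimpleGraph V} (h₁ : T₁.IsTree)
    (h₂ : T₂.IsTree) (hdisj : Disjoint T₁.edgeSet T₂.edgeSet) :
    (T₁.edgeSet ∪ T₂.edgeSet).ncard + 2 = 2 * Nat.card V := by
  have hcard₁ := (isTree_iff_connected_and_card.mp h₁).2
  have hcard₂ := (isTree_iff_connected_and_card.mp h₂).2
  rw [Nat.card_coe_set_eq] at hcard₁ hcard₂
  rw [Set.ncard_union_eq hdisj]
  omega

variable {G} in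
lemma ncard_edgeSet_le_cutCard [Finite V] {H : SimpleGraph V} (hle : H ≤ G) (Q : V → Bool)
    (hQ : ∀ u v, H.Adj u v → Q u ≠ Q v) : H.edgeSet.ncard ≤ cutCard G {v | Q v} := by
  have hsub : H.edgeSet ⊆ (fun p : V × V ↦ s(p.1, p.2)) ''
      {p : V × V | G.Adj p.1 p.2 ∧ p.1 ∈ {v | Q v} ∧ p.2 ∉ {v | Q v}} := by
    intro e he
    induction e using Sym2.ind with | _ u v
    have huv : H.Adj u v := he
    cases hu : Q u
    · refine ⟨(v, u), ⟨hle huv.symm, ?_, ?_⟩, Sym2.eq_swap⟩ <;> grind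
    · refine ⟨(u, v), ⟨hle huv, ?_, ?_⟩, rfl⟩ <;> grind
  exact (Set.ncard_le_ncard hsub (Set.toFinite _)).trans (Set.ncard_image_le (Set.toFinite _))

end SimpleGraph

theorem stmt8_general {V₀ : Type*} [Fintype V₀] (G₀ : SimpleGraph V₀)
    (P : V₀ → Bool)
    (hdeg : ∀ v, (P v = false → (G₀.neighborSet v).ncard = 3) ∧
                 (P v = true → (G₀.neighborSet v).ncard = 5))
    (b c n : ℕ)
    (hb : b = {v | (G₀.neighborSet v).ncard = 3}.ncard)
    (hc : c = {v | (G₀.neighborSet v).ncard = 5}.ncard)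
    (hn : n = G₀.edgeSet.ncard)
    (hn3b : n = 3 * b) (hn5c : n = 5 * c) (hn16 : 16 ≤ n) :
    (∀ X : Set G₀.edgeSet, X.Nonempty → X ≠ Set.univ →
        15 * cutCard G₀.lineGraph X ≤ 28 * n) ∧
    ¬ ∃ H : SimpleGraph G₀.edgeSet, H ≤ G₀.lineGraph ∧
        (∃ Q : G₀.edgeSet → Bool, ∀ u v, H.Adj u v → Q u ≠ Q v) ∧
        ∃ T₁ T₂ : SimpleGraph G₀.edgeSet, T₁.IsTree ∧ T₂.IsTree ∧
          Disjoint T₁.edgeSet T₂.edgeSet ∧ T₁.edgeSet ∪ T₂.edgeSet = H.edgeSet := by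
  have hdeg₃₅ (v : V₀) : (G₀.neighborSet v).ncard = 3 ∨ (G₀.neighborSet v).ncard = 5 := by
    cases hP : P v
    · exact .inl ((hdeg v).1 hP)
    · exact .inr ((hdeg v).2 hP)
  have hcut (X : Set G₀.edgeSet) : 15 * cutCard G₀.lineGraph X ≤ 28 * n := by
    have h := G₀.cutCard_lineGraph_le X
    rw [sum_sq_div_four_of_eq_three_or_eq_five _ hdeg₃₅, ← hb, ← hc] at h
    omega
  refine ⟨fun X _ _ ↦ hcut X, ?_⟩
  rintro ⟨H, hle, ⟨Q, hQ⟩, T₁, T₂, hT₁, hT₂, hdisj, hunion⟩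
  have hH := SimpleGraph.ncard_union_edgeSet_of_isTree hT₁ hT₂ hdisj
  rw [hunion, Nat.card_coe_set_eq, ← hn] at hH
  have hHcut := SimpleGraph.ncard_edgeSet_le_cutCard hle Q hQ
  have := hcut {e | Q e}
  omega

/-- Let `G` be the line graph of an essentially 6-edge-connected `(3,5)`-regular
bipartite graph `G₀` with `b` vertices of degree 3, `c` vertices of degree 5 and
`n = 3b = 5c` edges (`n ≥ 16`). Then every cut of `G` has at most `(28/15)·n`
edges; in particular `G` has no spanning bipartite subgraph decomposing into two
edge-disjoint spanning trees. -/
theorem stmt8 {V₀ : Type*} [Fintype V₀] (G₀ : SimpleGraph V₀)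
    (P : V₀ → Bool) (hbip : ∀ u v, G₀.Adj u v → P u ≠ P v)
    (hdeg : ∀ v, (P v = false → (G₀.neighborSet v).ncard = 3) ∧
                 (P v = true → (G₀.neighborSet v).ncard = 5))
    (b c n : ℕ)
    (hb : b = {v | (G₀.neighborSet v).ncard = 3}.ncard)
    (hc : c = {v | (G₀.neighborSet v).ncard = 5}.ncard)
    (hn : n = G₀.edgeSet.ncard)
    (hn3b : n = 3 * b) (hn5c : n = 5 * c) (hn16 : 16 ≤ n)
    (hess : ∀ X : Set V₀, (∃ u v, G₀.Adj u v ∧ u ∈ X ∧ v ∈ X) →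
      (∃ u v, G₀.Adj u v ∧ u ∉ X ∧ v ∉ X) → 6 ≤ cutCard G₀ X) :
    (∀ X : Set G₀.edgeSet, X.Nonempty → X ≠ Set.univ →
        15 * cutCard G₀.lineGraph X ≤ 28 * n) ∧
    ¬ ∃ H : SimpleGraph G₀.edgeSet, H ≤ G₀.lineGraph ∧
        (∃ Q : G₀.edgeSet → Bool, ∀ u v, H.Adj u v → Q u ≠ Q v) ∧
        ∃ T₁ T₂ : SimpleGraph G₀.edgeSet, T₁.IsTree ∧ T₂.IsTree ∧
          Disjoint T₁.edgeSet T₂.edgeSet ∧ T₁.edgeSet ∪ T₂.edgeSet = H.edgeSet :=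
  stmt8_general G₀ P hdeg b c n hb hc hn hn3b hn5c hn16
end

section
/- Every strongly connected digraph has a spanning strongly connected 3-partite subdigraph, i.e., a spanning strong subdigraph whose underlying graph is 3-colourable. -/
/-- A digraph (given by its arc relation) is strong if every vertex reaches
every other vertex by a directed path. -/
def IsStrong {V : Type*} (D : V → V → Prop) : Prop :=
  ∀ u v : V, Relation.ReflTransGen D u v

/-!
Grow a strong, properly 3-coloured subdigraph of `D` by ears. Given such a subdigraph on `S ≠ V`,
strong connectivity of `D` yields an arc `h → c` leaving `S` and a walk from `c` back into `S`
whose inner vertices lie outside `S`. Adding the vertices of this walk one at a time (after cutting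
out returns to the vertex just added), each new vertex has at most two coloured neighbours — its
predecessor and the endpoint `s` of the ear in `S` — so one of three colours is always free.
-/

open Relation Set

namespace Relation.ReflTransGen

variable {V : Type*} {R : V → V → Prop} {S : Set V} {a b : V}

theorem exists_arc_leaving (h : ReflTransGen R a b) (ha : a ∈ S) (hb : b ∉ S) :
    ∃ x y, R x y ∧ x ∈ S ∧ y ∉ S := by
  induction h with
  | refl => exact absurd ha hb
  | @tail x y _ hxy ih =>
    by_cases hx : x ∈ S
    · exact ⟨x, y, hxy, hx, hb⟩
    · exact ih hx

theorem exists_first_entry (h : ReflTransGen R a b) (ha : a ∉ S) (hb : b ∈ S) :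
    ∃ z s, ReflTransGen (fun x y => R x y ∧ y ∉ S) a z ∧ R z s ∧ s ∈ S := by
  induction h using ReflTransGen.head_induction_on with
  | refl => exact absurd hb ha
  | @head x y hxy _ ih =>
    by_cases hy : y ∈ S
    · exact ⟨x, y, .refl, hxy, hy⟩
    · obtain ⟨z, s, hyz, hzs, hs⟩ := ih hy
      exact ⟨z, s, .head ⟨hxy, hy⟩ hyz, hzs, hs⟩

theorem avoiding_source (h : ReflTransGen R a b) :
    ReflTransGen (fun x y => R x y ∧ y ≠ a) a b := by
  induction h with
  | refl => exact .refl
  | @tail x y _ hxy ih =>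
    by_cases hy : y = a
    · exact hy ▸ .refl
    · exact ih.tail ⟨hxy, hy⟩

end Relation.ReflTransGen

theorem Fin.exists_ne_ne_of_three (i j : Fin 3) : ∃ k, k ≠ i ∧ k ≠ j := by
  revert i j
  decide

section Digraph

variable {V : Type*}

def withArc (F : V → V → Prop) (a b : V) : V → V → Prop :=
  fun x y => F x y ∨ x = a ∧ y = b

theorem le_withArc (F : V → V → Prop) (a b : V) : F ≤ withArc F a b :=
  fun _ _ => Or.inl

theorem withArc_self (F : V → V → Prop) (a b : V) : withArc F a b a b :=
  Or.inr ⟨rfl, rfl⟩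

theorem reflTransGen_withArc {F : V → V → Prop} (a b : V) {x y : V} (h : ReflTransGen F x y) :
    ReflTransGen (withArc F a b) x y :=
  ReflTransGen.mono (le_withArc F a b) _ _ h

def IsStrongOn (F : V → V → Prop) (S : Set V) : Prop :=
  ∀ a ∈ S, ∀ b ∈ S, ReflTransGen F a b

theorem isStrongOn_univ_iff {F : V → V → Prop} : IsStrongOn F univ ↔ IsStrong F :=
  ⟨fun h a b => h a trivial b trivial, fun h a _ b _ => h a b⟩

structure IsTripartiteSubdigraphOn (D F : V → V → Prop) (P : V → Fin 3) (S : Set V) :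
    Prop where
  le : ∀ a b, F a b → D a b
  mem : ∀ a b, F a b → a ∈ S ∧ b ∈ S
  proper : ∀ a b, F a b → P a ≠ P b

namespace IsTripartiteSubdigraphOn

variable {D F : V → V → Prop} {P : V → Fin 3} {S : Set V} {a b : V}

theorem bot (D : V → V → Prop) (P : V → Fin 3) (S : Set V) :
    IsTripartiteSubdigraphOn D ⊥ P S :=
  ⟨fun _ _ h => h.elim, fun _ _ h => h.elim, fun _ _ h => h.elim⟩

theorem addArc (hF : IsTripartiteSubdigraphOn D F P S) (hD : D a b) (ha : a ∈ S) (hb : b ∈ S)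
    (hP : P a ≠ P b) : IsTripartiteSubdigraphOn D (withArc F a b) P S where
  le := by
    rintro x y (h | ⟨rfl, rfl⟩)
    exacts [hF.le x y h, hD]
  mem := by
    rintro x y (h | ⟨rfl, rfl⟩)
    exacts [hF.mem x y h, ⟨ha, hb⟩]
  proper := by
    rintro x y (h | ⟨rfl, rfl⟩)
    exacts [hF.proper x y h, hP]

theorem addVertex [DecidableEq V] (hF : IsTripartiteSubdigraphOn D F P S) (hD : D a b)
    (ha : a ∈ S) (hb : b ∉ S) {k : Fin 3} (hk : k ≠ P a) :
    IsTripartiteSubdigraphOn D (withArc F a b) (Function.update P b k) (insert b S) where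
  le := by
    rintro x y (h | ⟨rfl, rfl⟩)
    exacts [hF.le x y h, hD]
  mem := by
    rintro x y (h | ⟨rfl, rfl⟩)
    · exact ⟨mem_insert_of_mem b (hF.mem x y h).1, mem_insert_of_mem b (hF.mem x y h).2⟩
    · exact ⟨mem_insert_of_mem _ ha, mem_insert _ S⟩
  proper := by
    rintro x y (h | ⟨rfl, rfl⟩)
    · have hx : x ≠ b := fun hxb => hb (hxb ▸ (hF.mem x y h).1)
      have hy : y ≠ b := fun hyb => hb (hyb ▸ (hF.mem x y h).2)
      simpa [Function.update_of_ne hx, Function.update_of_ne hy] using hF.proper x y h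
    · have hxb : x ≠ y := fun hxb => hb (hxb ▸ ha)
      simpa [Function.update_of_ne hxb] using hk.symm

end IsTripartiteSubdigraphOn

variable {D : V → V → Prop}

theorem exists_strong_extension_of_ear [Finite V] {F : V → V → Prop} {P : V → Fin 3}
    {S : Set V} {h s c z : V} (hF : IsTripartiteSubdigraphOn D F P S)
    (hh : h ∈ S) (hs : s ∈ S) (hfrom : ∀ a ∈ S, ReflTransGen F s a)
    (hto : ∀ a ∈ S, ReflTransGen F a h) (hc : c ∉ S) (hhc : D h c)
    (hcz : ReflTransGen (fun x y => D x y ∧ y ∉ S) c z) (hzs : D z s) :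
    ∃ S' F' P', insert c S ⊆ S' ∧ IsTripartiteSubdigraphOn D F' P' S' ∧
      IsStrongOn F' S' := by
  classical
  obtain ⟨k, hkh, hks⟩ := Fin.exists_ne_ne_of_three (P h) (P s)
  have hF₁ := hF.addVertex hhc hh hc hkh
  set F₁ := withArc F h c
  set P₁ := Function.update P c k
  have hfrom₁ : ∀ a ∈ insert c S, ReflTransGen F₁ s a := by
    rintro a (rfl | ha)
    · exact (reflTransGen_withArc h a (hfrom h hh)).tail (withArc_self F h a)
    · exact reflTransGen_withArc h c (hfrom a ha)
  have hto₁ : ∀ a ∈ insert c S, ReflTransGen F₁ a c := by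
    rintro a (rfl | ha)
    · exact .refl
    · exact (reflTransGen_withArc h c (hto a ha)).tail (withArc_self F h c)
  have hcz' : ReflTransGen (fun x y => D x y ∧ y ∉ insert c S) c z :=
    ReflTransGen.mono (fun _ _ ⟨⟨hxy, hyS⟩, hyc⟩ => ⟨hxy, fun hy => hy.elim hyc hyS⟩)
      _ _ hcz.avoiding_source
  rcases hcz'.cases_head with rfl | ⟨c', ⟨hcc', hc'⟩, hc'z⟩
  · have hsc : s ≠ c := fun hsc => hc (hsc ▸ hs)
    have hP : P₁ c ≠ P₁ s := by simpa [P₁, Function.update_of_ne hsc] using hks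
    refine ⟨insert c S, withArc F₁ c s, P₁, subset_rfl,
      hF₁.addArc hzs (mem_insert c S) (mem_insert_of_mem c hs) hP, fun a ha b hb => ?_⟩
    exact ((reflTransGen_withArc c s (hto₁ a ha)).tail (withArc_self F₁ c s)).trans
      (reflTransGen_withArc c s (hfrom₁ b hb))
  · obtain ⟨S', F', P', hsub, hF', hstrong⟩ := exists_strong_extension_of_ear hF₁
      (mem_insert c S) (mem_insert_of_mem c hs) hfrom₁ hto₁ hc' hcc' hc'z hzs
    exact ⟨S', F', P', (subset_insert c' _).trans hsub, hF', hstrong⟩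
termination_by Sᶜ.ncard
decreasing_by
  exact ncard_lt_ncard (compl_lt_compl_iff_lt.mpr (ssubset_insert hc))

theorem exists_strong_extension [Finite V] {F : V → V → Prop} {P : V → Fin 3} {S : Set V}
    (hD : IsStrong D) (hF : IsTripartiteSubdigraphOn D F P S)
    (hstrong : IsStrongOn F S) (hne : S.Nonempty) (hS : S ≠ univ) :
    ∃ S' F' P', S ⊂ S' ∧ IsTripartiteSubdigraphOn D F' P' S' ∧ IsStrongOn F' S' := by
  obtain ⟨x, hx⟩ := hne
  obtain ⟨y, hy⟩ := (ne_univ_iff_exists_notMem S).mp hS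
  obtain ⟨h, c, hhc, hh, hc⟩ := (hD x y).exists_arc_leaving hx hy
  obtain ⟨z, s, hcz, hzs, hs⟩ := (hD c x).exists_first_entry hc hx
  obtain ⟨S', F', P', hsub, hF', hstrong'⟩ := exists_strong_extension_of_ear hF hh hs
    (hstrong s hs) (fun a ha => hstrong a ha h hh) hc hhc hcz hzs
  exact ⟨S', F', P', (ssubset_insert hc).trans_subset hsub, hF', hstrong'⟩

theorem exists_spanning_of_isStrongOn [Finite V] {F : V → V → Prop} {P : V → Fin 3}
    {S : Set V}
    (hD : IsStrong D) (hF : IsTripartiteSubdigraphOn D F P S)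
    (hstrong : IsStrongOn F S) (hne : S.Nonempty) :
    ∃ F' P', IsTripartiteSubdigraphOn D F' P' univ ∧ IsStrong F' := by
  by_cases hS : S = univ
  · subst hS
    exact ⟨F, P, hF, isStrongOn_univ_iff.mp hstrong⟩
  · obtain ⟨S', F', P', hlt, hF', hstrong'⟩ := exists_strong_extension hD hF hstrong hne hS
    exact exists_spanning_of_isStrongOn hD hF' hstrong' (hne.mono hlt.subset)
termination_by Sᶜ.ncard
decreasing_by
  exact ncard_lt_ncard (compl_lt_compl_iff_lt.mpr hlt)

end Digraph

theorem stmt10_general {V : Type*} [Fintype V] (D : V → V → Prop)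
    (hstrong : IsStrong D) :
    ∃ H : V → V → Prop, (∀ u v, H u v → D u v) ∧ IsStrong H ∧
      ∃ P : V → Fin 3, ∀ u v, H u v → P u ≠ P v := by
  obtain ⟨F, P, hF, hFs⟩ : ∃ F P, IsTripartiteSubdigraphOn D F P univ ∧ IsStrong F := by
    rcases isEmpty_or_nonempty V with _ | ⟨⟨v⟩⟩
    · exact ⟨⊥, fun _ => 0, .bot D _ univ, fun a => isEmptyElim a⟩
    · refine exists_spanning_of_isStrongOn hstrong (.bot D (fun _ => 0) {v}) ?_ ⟨v, rfl⟩
      rintro a rfl b rfl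
      exact .refl
  exact ⟨F, hF.le, hFs, P, hF.proper⟩

/-- Every strongly connected digraph has a spanning strongly connected
3-partite subdigraph. -/
theorem stmt10 {V : Type*} [Fintype V] (D : V → V → Prop)
    (hloopless : ∀ v, ¬ D v v) (hstrong : IsStrong D) :
    ∃ H : V → V → Prop, (∀ u v, H u v → D u v) ∧ IsStrong H ∧
      ∃ P : V → Fin 3, ∀ u v, H u v → P u ≠ P v :=
  stmt10_general D hstrong
end

section
/- For all integers k ≥ 1 and r ≥ k+1 there exists a k-arc-connected digraph D on (2k+1)r vertices such that every spanning k-arc-connected subdigraph of D has chromatic number at least 2k+1. -/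
/-- `k`-arc-connectivity: every nonempty proper vertex set has out-degree at least `k`. -/
def IsKArcConnected {V : Type*} (D : V → V → Prop) (k : ℕ) : Prop :=
  ∀ X : Set V, X.Nonempty → X ≠ Set.univ →
    k ≤ {p : V × V | D p.1 p.2 ∧ p.1 ∈ X ∧ p.2 ∉ X}.ncard

/-!
The digraph is `r` copies of the rotative tournament `R_{2k+1}` whose vertices `0` are joined
by a complete digraph (instead of the `k`-th power of a cycle; any `k`-arc-connected digraph on
these hubs would do). A tournament in which every vertex has out-degree `k` is `k`-arc-connected,
since a set of `m` vertices sends `m(2k+1-m)/2 ≥ k` arcs out of itself; a cut of the whole digraph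
either splits a copy or separates hubs, so the digraph is `k`-arc-connected.

Every vertex of a copy other than its hub `0` has in- and out-degree exactly `k` in the whole
digraph, so a `k`-arc-connected spanning subdigraph keeps all arcs at it. Every arc of `R_{2k+1}`
has such an endpoint, so each copy survives, and a tournament on `2k+1` vertices needs `2k+1`
colours.
-/

open Set

section Digraph

variable {V W : Type*}

def outArcs (D : V → V → Prop) (X : Set V) : Set (V × V) :=
  {p | D p.1 p.2 ∧ p.1 ∈ X ∧ p.2 ∉ X}

theorem IsKArcConnected.mono {D : V → V → Prop} {k l : ℕ} (hD : IsKArcConnected D k)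
    (hlk : l ≤ k) : IsKArcConnected D l :=
  fun X hX hXu => hlk.trans (hD X hX hXu)

theorem IsKArcConnected.le_ncard_outArcs_of_injective [Finite V] {E : W → W → Prop}
    {D : V → V → Prop} {k : ℕ} (hE : IsKArcConnected E k) {f : W → V} (hf : f.Injective)
    (hED : ∀ a b, E a b → D (f a) (f b)) {X : Set V} (hX : (f ⁻¹' X).Nonempty)
    (hXu : f ⁻¹' X ≠ univ) : k ≤ (outArcs D X).ncard := by
  calc k ≤ (outArcs E (f ⁻¹' X)).ncard := hE _ hX hXu
    _ = (Prod.map f f '' outArcs E (f ⁻¹' X)).ncard :=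
      (ncard_image_of_injective _ (hf.prodMap hf)).symm
    _ ≤ (outArcs D X).ncard := by
      refine ncard_le_ncard ?_
      rintro _ ⟨p, ⟨hp, h1, h2⟩, rfl⟩
      exact ⟨hED _ _ hp, h1, h2⟩

theorem IsKArcConnected.comp_equiv [Finite V] {D : V → V → Prop} {k : ℕ}
    (hD : IsKArcConnected D k) (e : W ≃ V) : IsKArcConnected (fun x y => D (e x) (e y)) k := by
  have := Finite.of_equiv V e.symm
  intro X hX hXu
  refine hD.le_ncard_outArcs_of_injective (D := fun x y => D (e x) (e y)) e.symm.injective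
    (fun a b h => by simpa using h) ?_ ?_
  · rw [← e.image_eq_preimage_symm]
    exact hX.image e
  · simpa using hXu

theorem isKArcConnected_ne [Finite V] :
    IsKArcConnected (fun a b : V => a ≠ b) (Nat.card V - 1) := by
  intro A hA hAu
  have hpos : 0 < A.ncard := (ncard_pos).2 hA
  have hpos' : 0 < Aᶜ.ncard := (ncard_pos).2 (nonempty_compl.2 hAu)
  have hcut : outArcs (fun a b : V => a ≠ b) A = A ×ˢ Aᶜ := by
    ext ⟨a, b⟩
    simp only [outArcs, mem_ofPred_eq, mem_prod, mem_compl_iff]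
    exact ⟨fun h => h.2, fun h => ⟨fun hab => h.2 (hab ▸ h.1), h⟩⟩
  change _ ≤ (outArcs _ A).ncard
  rw [hcut, ncard_prod, ← ncard_add_ncard_compl A, Nat.sub_le_iff_le_add]
  nlinarith

theorem IsKArcConnected.adj_of_mem_outArcs [Finite V] {H D : V → V → Prop} {k : ℕ}
    (hH : IsKArcConnected H k) (hHD : ∀ u v, H u v → D u v) {X : Set V}
    (hDX : (outArcs D X).ncard ≤ k) {u v : V} (huv : (u, v) ∈ outArcs D X) : H u v := by
  have hXu : X ≠ univ := (ne_univ_iff_exists_notMem X).2 ⟨v, huv.2.2⟩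
  have hHX : outArcs H X = outArcs D X :=
    eq_of_subset_of_ncard_le (fun _ ⟨hp, h1, h2⟩ => ⟨hHD _ _ hp, h1, h2⟩)
      (hDX.trans (hH X ⟨u, huv.2.1⟩ hXu))
  exact (hHX ▸ huv).1

end Digraph

section Tournament

open Finset

variable {V : Type*} {T : V → V → Prop} {k : ℕ}

theorem two_mul_ncard_outArcs_add_card_mul_self [Fintype V] (hirr : ∀ a, ¬ T a a)
    (htot : ∀ a b, a ≠ b → (T a b ↔ ¬ T b a)) (hout : ∀ a, {b | T a b}.ncard = k)
    (Y : Finset V) : 2 * (outArcs T Y).ncard + #Y * #Y = (2 * k + 1) * #Y := by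
  classical
  let ι a b : ℕ := if T a b then 1 else 0
  have hdeg (a : V) : ∑ b, ι a b = k := by
    rw [sum_boole, Nat.cast_id, ← hout a, ncard_eq_toFinset_card', toFinset_ofPred]
  have hcut : (outArcs T Y).ncard = ∑ a ∈ Y, ∑ b ∈ Yᶜ, ι a b := by
    have : outArcs T Y = ↑((Y ×ˢ Yᶜ).filter fun p => T p.1 p.2) := by
      ext; simp [outArcs, and_comm]
    rw [this, ncard_coe_finset, card_filter, sum_product]
  have hpair (a b : V) : ι a b + ι b a + (if a = b then 1 else 0) = 1 := by
    by_cases hab : a = b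
    · subst hab; simp [ι, hirr]
    · by_cases h : T a b
      · simp [ι, h, hab, (htot a b hab).1 h]
      · simp [ι, h, hab, not_not.1 (mt (htot a b hab).2 h)]
  have hwithin : 2 * ∑ a ∈ Y, ∑ b ∈ Y, ι a b + #Y = #Y * #Y := by
    have := congrArg (fun f : V → V → ℕ => ∑ a ∈ Y, ∑ b ∈ Y, f a b) (funext₂ hpair)
    simp only [sum_add_distrib, sum_ite_eq, sum_const, smul_eq_mul, mul_one] at this
    rw [sum_comm (f := fun a b => ι b a)] at this
    simpa [two_mul] using this
  have hsplit : k * #Y = ∑ a ∈ Y, ∑ b ∈ Y, ι a b + ∑ a ∈ Y, ∑ b ∈ Yᶜ, ι a b := by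
    simp_rw [← sum_add_distrib, sum_add_sum_compl, hdeg, sum_const, smul_eq_mul, mul_comm]
  rw [hcut]
  linarith

theorem isKArcConnected_of_tournament [Finite V] (hirr : ∀ a, ¬ T a a)
    (htot : ∀ a b, a ≠ b → (T a b ↔ ¬ T b a)) (hout : ∀ a, {b | T a b}.ncard = k) :
    IsKArcConnected T k := by
  classical
  have := Fintype.ofFinite V
  intro X hX hXu
  have hV := two_mul_ncard_outArcs_add_card_mul_self hirr htot hout univ
  rw [coe_univ, show outArcs T univ = ∅ by simp [outArcs], ncard_empty, card_univ] at hV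
  have hY := two_mul_ncard_outArcs_add_card_mul_self hirr htot hout X.toFinset
  rw [coe_toFinset] at hY
  have hpos : 0 < #X.toFinset := card_pos.2 (toFinset_nonempty.2 hX)
  obtain ⟨x, hx⟩ := (ne_univ_iff_exists_notMem X).1 hXu
  have hlt : #X.toFinset < Fintype.card V := card_lt_univ_of_notMem (by simpa using hx)
  have hcard : Fintype.card V = 2 * k + 1 :=
    Nat.eq_of_mul_eq_mul_right (hpos.trans hlt) (by simpa using hV)
  change k ≤ (outArcs T X).ncard
  nlinarith

end Tournament

section Rotative

def rotative (k : ℕ) (a b : Fin (2 * k + 1)) : Prop :=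
  (b - a).val ∈ Icc 1 k

variable {k : ℕ}

theorem rotative_irrefl (a : Fin (2 * k + 1)) : ¬ rotative k a a := by
  simp [rotative]

theorem rotative_iff_not_rotative {a b : Fin (2 * k + 1)} (hab : a ≠ b) :
    rotative k a b ↔ ¬ rotative k b a := by
  have hsum : (b - a).val + (a - b).val = 2 * k + 1 := by
    rcases lt_or_gt_of_ne hab with h | h <;>
      rw [Fin.coe_sub_iff_le.2 h.le, Fin.coe_sub_iff_lt.2 h] <;> omega
  simp only [rotative, mem_Icc]
  omega

theorem ncard_val_preimage_Icc_one {n : ℕ} (hkn : k < n) :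
    (Fin.val ⁻¹' Icc 1 k : Set (Fin n)).ncard = k := by
  rw [ncard_preimage_of_injective_subset_range Fin.val_injective, ncard_Icc_nat,
    Nat.add_sub_cancel]
  exact fun d hd => ⟨⟨d, hd.2.trans_lt hkn⟩, rfl⟩

theorem ncard_setOf_rotative (a : Fin (2 * k + 1)) : {b | rotative k a b}.ncard = k := by
  conv_rhs => rw [← ncard_val_preimage_Icc_one (k := k) (n := 2 * k + 1) (by omega)]
  exact ncard_preimage_of_injective_subset_range (s := Fin.val ⁻¹' Icc 1 k)
    (sub_left_injective (b := a))
    (fun d _ => ⟨d + a, add_sub_cancel_right d a⟩)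

theorem ncard_setOf_rotative_left (b : Fin (2 * k + 1)) : {a | rotative k a b}.ncard = k := by
  conv_rhs => rw [← ncard_val_preimage_Icc_one (k := k) (n := 2 * k + 1) (by omega)]
  exact ncard_preimage_of_injective_subset_range (s := Fin.val ⁻¹' Icc 1 k)
    (sub_right_injective (b := b))
    (fun d _ => ⟨b - d, sub_sub_cancel b d⟩)

end Rotative

section RotativeCopies

def rotativeCopies (k r : ℕ) (u v : Fin (2 * k + 1) × Fin r) : Prop :=
  (u.2 = v.2 ∧ rotative k u.1 v.1) ∨ (u.1 = 0 ∧ v.1 = 0 ∧ u.2 ≠ v.2)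

variable {k r : ℕ}

theorem rotativeCopies_irrefl (v : Fin (2 * k + 1) × Fin r) : ¬ rotativeCopies k r v v := by
  rintro (⟨-, h⟩ | ⟨-, -, h⟩)
  exacts [rotative_irrefl _ h, h rfl]

theorem isKArcConnected_rotativeCopies (hr : k + 1 ≤ r) :
    IsKArcConnected (rotativeCopies k r) k := by
  intro X hX hXu
  by_cases hsplit : ∃ i : Fin r, ((·, i) ⁻¹' X).Nonempty ∧ (·, i) ⁻¹' X ≠ univ
  · obtain ⟨i, hi, hiu⟩ := hsplit
    exact (isKArcConnected_of_tournament rotative_irrefl (fun _ _ => rotative_iff_not_rotative)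
      ncard_setOf_rotative).le_ncard_outArcs_of_injective (Prod.mk_left_injective i)
      (fun _ _ h => Or.inl ⟨rfl, h⟩) hi hiu
  push Not at hsplit
  have hcol {a : Fin (2 * k + 1)} {i : Fin r} : (a, i) ∈ X ↔ ((0 : Fin (2 * k + 1)), i) ∈ X :=
    ⟨fun h => show 0 ∈ (·, i) ⁻¹' X from hsplit i ⟨a, h⟩ ▸ mem_univ _,
      fun h => show a ∈ (·, i) ⁻¹' X from hsplit i ⟨0, h⟩ ▸ mem_univ _⟩
  have hhub : IsKArcConnected (fun i j : Fin r => i ≠ j) k :=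
    isKArcConnected_ne.mono (by rw [Nat.card_fin]; omega)
  refine hhub.le_ncard_outArcs_of_injective (Prod.mk_right_injective 0)
    (fun _ _ h => Or.inr ⟨rfl, rfl, h⟩) ?_ ?_
  · obtain ⟨⟨a, i⟩, h⟩ := hX
    exact ⟨i, hcol.1 h⟩
  · obtain ⟨⟨a, i⟩, h⟩ := (ne_univ_iff_exists_notMem X).1 hXu
    exact (ne_univ_iff_exists_notMem _).2 ⟨i, mt hcol.2 h⟩

theorem outArcs_rotativeCopies_singleton_subset {a : Fin (2 * k + 1)} (ha : a ≠ 0) (i : Fin r) :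
    outArcs (rotativeCopies k r) {(a, i)} ⊆
      (fun b => ((a, i), (b, i))) '' {b | rotative k a b} := by
  rintro ⟨u, b, j⟩ ⟨huv, hu, -⟩
  rw [mem_singleton_iff] at hu
  subst hu
  rcases huv with ⟨hij, hrot⟩ | ⟨h0, -, -⟩
  · obtain rfl : i = j := hij
    exact ⟨b, hrot, rfl⟩
  · exact absurd h0 ha

theorem outArcs_rotativeCopies_compl_singleton_subset {b : Fin (2 * k + 1)} (hb : b ≠ 0)
    (i : Fin r) :
    outArcs (rotativeCopies k r) {(b, i)}ᶜ ⊆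
      (fun a => ((a, i), (b, i))) '' {a | rotative k a b} := by
  rintro ⟨⟨a, j⟩, v⟩ ⟨huv, -, hv⟩
  rw [notMem_compl_iff, mem_singleton_iff] at hv
  subst hv
  rcases huv with ⟨hji, hrot⟩ | ⟨-, h0, -⟩
  · obtain rfl : j = i := hji
    exact ⟨a, hrot, rfl⟩
  · exact absurd h0 hb

theorem IsKArcConnected.adj_of_rotative
    {H : Fin (2 * k + 1) × Fin r → Fin (2 * k + 1) × Fin r → Prop}
    (hH : IsKArcConnected H k) (hHD : ∀ u v, H u v → rotativeCopies k r u v)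
    {a b : Fin (2 * k + 1)} (hab : rotative k a b) (i : Fin r) : H (a, i) (b, i) := by
  have hne : a ≠ b := by rintro rfl; exact rotative_irrefl a hab
  have harc : rotativeCopies k r (a, i) (b, i) := Or.inl ⟨rfl, hab⟩
  by_cases hb : b = 0
  · refine hH.adj_of_mem_outArcs hHD ?_ (X := {(a, i)}) ⟨harc, rfl, by simpa using hne.symm⟩
    exact (ncard_le_ncard (outArcs_rotativeCopies_singleton_subset (hb ▸ hne) i)).trans
      ((ncard_image_le (toFinite _)).trans (ncard_setOf_rotative a).le)
  · refine hH.adj_of_mem_outArcs hHD ?_ (X := {(b, i)}ᶜ) ⟨harc, by simpa using hne, by simp⟩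
    exact (ncard_le_ncard (outArcs_rotativeCopies_compl_singleton_subset hb i)).trans
      ((ncard_image_le (toFinite _)).trans (ncard_setOf_rotative_left b).le)

end RotativeCopies

theorem stmt16_general (k r : ℕ) (hr : k + 1 ≤ r) :
    ∃ D : Fin ((2 * k + 1) * r) → Fin ((2 * k + 1) * r) → Prop,
      (∀ v, ¬ D v v) ∧ IsKArcConnected D k ∧
      ∀ H : Fin ((2 * k + 1) * r) → Fin ((2 * k + 1) * r) → Prop,
        (∀ u v, H u v → D u v) → IsKArcConnected H k →
        ¬ ∃ P : Fin ((2 * k + 1) * r) → Fin (2 * k), ∀ u v, H u v → P u ≠ P v := by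
  let e : Fin (2 * k + 1) × Fin r ≃ Fin ((2 * k + 1) * r) := finProdFinEquiv
  refine ⟨fun x y => rotativeCopies k r (e.symm x) (e.symm y), fun _ => rotativeCopies_irrefl _,
    (isKArcConnected_rotativeCopies hr).comp_equiv e.symm, ?_⟩
  rintro H hHD hH ⟨P, hP⟩
  have hH' : IsKArcConnected (fun u v => H (e u) (e v)) k := hH.comp_equiv e
  have hHD' (u v) (h : H (e u) (e v)) : rotativeCopies k r u v := by simpa using hHD _ _ h
  let i : Fin r := ⟨0, by omega⟩
  have hcol : Function.Injective fun a => P (e (a, i)) := by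
    intro a b hPab
    by_contra hne
    obtain hab | hba := (em (rotative k a b)).imp_right (rotative_iff_not_rotative (Ne.symm hne)).2
    · exact hP _ _ (hH'.adj_of_rotative hHD' hab i) hPab
    · exact hP _ _ (hH'.adj_of_rotative hHD' hba i) hPab.symm
  simpa using Fintype.card_le_of_injective _ hcol

/-- For all `k ≥ 1` and `r ≥ k+1` there is a `k`-arc-connected digraph on
`(2k+1)·r` vertices each of whose spanning `k`-arc-connected subdigraphs has
chromatic number at least `2k+1`. -/
theorem stmt16 (k r : ℕ) (hk : 1 ≤ k) (hr : k + 1 ≤ r) :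
    ∃ D : Fin ((2 * k + 1) * r) → Fin ((2 * k + 1) * r) → Prop,
      (∀ v, ¬ D v v) ∧ IsKArcConnected D k ∧
      ∀ H : Fin ((2 * k + 1) * r) → Fin ((2 * k + 1) * r) → Prop,
        (∀ u v, H u v → D u v) → IsKArcConnected H k →
        ¬ ∃ P : Fin ((2 * k + 1) * r) → Fin (2 * k), ∀ u v, H u v → P u ≠ P v :=
  stmt16_general k r hr
end

section
/- Every digraph D has a vertex 4-colouring c such that every vertex v has at least ⌈d⁺(v)/2⌉ out-neighbours coloured differently from v (a majority 4-colouring). -/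
/-!
Number the vertices. Every arc of a loopless digraph either goes down or up in this numbering,
and each of these two spanning subdigraphs is acyclic. An acyclic digraph has a majority
2-colouring: colour the vertices in increasing order of their numbers, giving each vertex the
colour that is rarer among its (already coloured) out-neighbours. The product of the two
2-colourings is a majority 4-colouring of the whole digraph, since an out-neighbour of `v`
sharing the colour of `v` in the product shares it in the colouring of the subdigraph containing
the arc.
-/

open Set Function

section

variable {V κ : Type*}

def IsMajorityColouring (D : V → V → Prop) (c : V → κ) : Prop :=
  ∀ v, {w | D v w}.ncard ≤ 2 * {w | D v w ∧ c w ≠ c v}.ncard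

theorem ncard_outNbrs_eq_add [Finite V] (D : V → V → Prop) (c : V → κ) (v : V) :
    {w | D v w}.ncard = {w | D v w ∧ c w = c v}.ncard + {w | D v w ∧ c w ≠ c v}.ncard :=
  (ncard_inter_add_ncard_sdiff_eq_ncard {w | D v w} {w | c w = c v}).symm

theorem isMajorityColouring_iff [Finite V] {D : V → V → Prop} {c : V → κ} :
    IsMajorityColouring D c ↔ ∀ v, 2 * {w | D v w ∧ c w = c v}.ncard ≤ {w | D v w}.ncard := by
  refine forall_congr' fun v => ?_
  have := ncard_outNbrs_eq_add D c v
  omega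

theorem IsMajorityColouring.comp_injective {κ' : Type*} {D : V → V → Prop} {c : V → κ}
    (hc : IsMajorityColouring D c) {g : κ → κ'} (hg : Injective g) :
    IsMajorityColouring D (g ∘ c) := by
  simpa only [IsMajorityColouring, comp_apply, hg.ne_iff] using hc

theorem IsMajorityColouring.prod [Finite V] {κ' : Type*} {D E₁ E₂ : V → V → Prop}
    {c₁ : V → κ} {c₂ : V → κ'} (h₁ : IsMajorityColouring E₁ c₁) (h₂ : IsMajorityColouring E₂ c₂)
    (hD : ∀ v w, D v w ↔ E₁ v w ∨ E₂ v w) (hdisj : ∀ v w, E₁ v w → ¬ E₂ v w) :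
    IsMajorityColouring D (fun v => (c₁ v, c₂ v)) := by
  rw [isMajorityColouring_iff] at h₁ h₂ ⊢
  intro v
  have hsame : {w | D v w ∧ (c₁ w, c₂ w) = (c₁ v, c₂ v)} ⊆
      {w | E₁ v w ∧ c₁ w = c₁ v} ∪ {w | E₂ v w ∧ c₂ w = c₂ v} := by
    rintro w ⟨hvw, hc⟩
    rw [Prod.mk.injEq] at hc
    rcases (hD v w).1 hvw with h | h
    exacts [Or.inl ⟨h, hc.1⟩, Or.inr ⟨h, hc.2⟩]
  have hout : {w | D v w} = {w | E₁ v w} ∪ {w | E₂ v w} := by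
    ext w
    exact hD v w
  have hdisj' : Disjoint {w | E₁ v w} {w | E₂ v w} :=
    disjoint_left.2 fun w => hdisj v w
  calc 2 * {w | D v w ∧ (c₁ w, c₂ w) = (c₁ v, c₂ v)}.ncard
      ≤ 2 * ({w | E₁ v w ∧ c₁ w = c₁ v}.ncard + {w | E₂ v w ∧ c₂ w = c₂ v}.ncard) := by
        gcongr
        exact (ncard_le_ncard hsame).trans (ncard_union_le _ _)
    _ ≤ {w | E₁ v w}.ncard + {w | E₂ v w}.ncard := by linarith [h₁ v, h₂ v]
    _ = {w | D v w}.ncard := by rw [hout, ncard_union_eq hdisj']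

theorem exists_bool_two_mul_ncard_le [Finite V] (s : Set V) (c : V → Bool) :
    ∃ b, 2 * {w | w ∈ s ∧ c w = b}.ncard ≤ s.ncard := by
  have hsplit : {w | w ∈ s ∧ c w = true}.ncard + {w | w ∈ s ∧ c w = false}.ncard = s.ncard := by
    simp only [← Bool.not_eq_true]
    exact ncard_inter_add_ncard_sdiff_eq_ncard s {w | c w = true}
  by_cases h : 2 * {w | w ∈ s ∧ c w = true}.ncard ≤ s.ncard
  · exact ⟨true, h⟩
  · exact ⟨false, by omega⟩

theorem exists_bool_isMajorityColouring_of_lt [Finite V] {α : Type*} [LinearOrder α]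
    (E : V → V → Prop) (f : V → α) (hE : ∀ v w, E v w → f w < f v) :
    ∃ c : V → Bool, IsMajorityColouring E c := by
  classical
  cases nonempty_fintype V
  suffices ∀ s : Finset V, ∃ c : V → Bool, ∀ v ∈ s,
      2 * {w | w ∈ s ∧ E v w ∧ c w = c v}.ncard ≤ {w | w ∈ s ∧ E v w}.ncard by
    obtain ⟨c, hc⟩ := this Finset.univ
    refine ⟨c, isMajorityColouring_iff.2 fun v => ?_⟩
    simpa only [Finset.mem_univ, true_and] using hc v (Finset.mem_univ v)
  intro s
  induction s using Finset.induction_on_max_value f with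
  | empty => exact ⟨fun _ => true, by simp⟩
  | insert a s ha hmax ih =>
    obtain ⟨c, hc⟩ := ih
    obtain ⟨b, hb⟩ := exists_bool_two_mul_ncard_le {w | w ∈ s ∧ E a w} c
    refine ⟨update c a b, fun v hv => ?_⟩
    -- No arc of the larger set enters `a`, so counting inside `insert a s` is counting inside `s`,
    -- where the new colouring agrees with `c`.
    have hrestrict : ∀ P : V → Prop,
        {w | w ∈ insert a s ∧ E v w ∧ P w} = {w | w ∈ s ∧ E v w ∧ P w} := by
      intro P
      ext w
      simp only [Finset.mem_insert, mem_ofPred_eq, or_and_right, or_iff_right_iff_imp, and_imp]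
      rintro rfl hvw
      rcases Finset.mem_insert.1 hv with rfl | hv
      · exact absurd (hE _ _ hvw) (lt_irrefl _)
      · exact absurd (hE _ _ hvw) (hmax v hv).not_gt
    have hupdate : ∀ x, {w | w ∈ s ∧ E v w ∧ update c a b w = x} =
        {w | w ∈ s ∧ E v w ∧ c w = x} := by
      intro x
      ext w
      simp only [mem_ofPred_eq, and_congr_right_iff]
      intro hw _
      rw [update_of_ne (ne_of_mem_of_not_mem hw ha)]
    have hall := hrestrict (fun _ => True)
    simp only [and_true] at hall
    rw [hrestrict, hupdate, hall]
    rcases Finset.mem_insert.1 hv with rfl | hv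
    · simpa only [update_self, mem_ofPred_eq, and_assoc] using hb
    · simpa only [update_of_ne (ne_of_mem_of_not_mem hv ha)] using hc v hv

end

/-- Every digraph has a majority 4-colouring: a 4-colouring `c` such that every
vertex `v` has at least `⌈d⁺(v)/2⌉` out-neighbours coloured differently from `v`. -/
theorem stmt18 {V : Type*} [Fintype V] (D : V → V → Prop)
    (hloopless : ∀ v, ¬ D v v) :
    ∃ c : V → Fin 4, ∀ v : V,
      {w | D v w}.ncard ≤ 2 * {w | D v w ∧ c w ≠ c v}.ncard := by
  set f : V → ℕ := fun v => Fintype.equivFin V v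
  have hf : Injective f := Fin.val_injective.comp (Fintype.equivFin V).injective
  obtain ⟨c₁, hc₁⟩ := exists_bool_isMajorityColouring_of_lt
    (fun v w => D v w ∧ f w < f v) f fun _ _ h => h.2
  obtain ⟨c₂, hc₂⟩ := exists_bool_isMajorityColouring_of_lt
    (fun v w => D v w ∧ f v < f w) (OrderDual.toDual ∘ f) fun _ _ h => h.2
  have hsplit : ∀ v w, D v w ↔ (D v w ∧ f w < f v) ∨ (D v w ∧ f v < f w) := by
    intro v w
    have hne : D v w → f w ≠ f v := fun hvw hfw => hloopless v (hf hfw ▸ hvw)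
    constructor
    · intro hvw
      rcases (hne hvw).lt_or_gt with h | h
      exacts [Or.inl ⟨hvw, h⟩, Or.inr ⟨hvw, h⟩]
    · rintro (h | h) <;> exact h.1
  have hc := hc₁.prod hc₂ hsplit fun _ _ h₁ h₂ => h₁.2.asymm h₂.2
  exact ⟨_, hc.comp_injective (Fintype.equivFinOfCardEq rfl : Bool × Bool ≃ Fin 4).injective⟩
end

section
/- Let D be a digraph and (X,Y) a partition of V(D). Then D has a spanning 3-partite subdigraph H such that every x ∈ X satisfies d⁺_H(x) ≥ ⌈d⁺_D(x)/3⌉ and every y ∈ Y satisfies d⁻_H(y) ≥ ⌈d⁻_D(y)/3⌉. -/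
open Finset Matrix

namespace Stmt19Aux

set_option linter.unusedSectionVars false

variable {V : Type*} [Fintype V] [DecidableEq V]

lemma card_filter_eq_sum_ind (s : Finset V) (c : V → Fin 3) (γ : Fin 3) :
    (((s.filter (fun u => c u = γ)).card : ℚ)) = ∑ u ∈ s, (if c u = γ then (1:ℚ) else 0) := by
  rw [Finset.card_filter]
  push_cast
  rfl

lemma sum_card_filter_colors (s : Finset V) (c : V → Fin 3) :
    ∑ γ : Fin 3, (((s.filter (fun u => c u = γ)).card : ℚ)) = (s.card : ℚ) := by
  simp only [card_filter_eq_sum_ind]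
  rw [Finset.sum_comm]
  simp


lemma sum_card_filter_colors_nat (s : Finset V) (c : V → Fin 3) :
    ∑ γ : Fin 3, ((s.filter (fun u => c u = γ)).card) = s.card := by
  simp only [Finset.card_filter]
  rw [Finset.sum_comm]
  simp


lemma exists_stationary (N : V → Finset V) (S : Finset V)
    (hsub : ∀ v ∈ S, N v ⊆ S)
    (hne : ∀ v ∈ S, (N v).Nonempty)
    (hconn : ∀ u ∈ S, ∀ v ∈ S, Relation.ReflTransGen (fun a b => b ∈ N a) u v)
    (hS : S.Nonempty) :
    ∃ x : V → ℚ, (∀ u, 0 ≤ x u) ∧ (∀ v ∈ S, 0 < x v) ∧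
      (∀ v ∈ S, ∑ u ∈ S.filter (fun u => v ∈ N u), x u / (N u).card = x v) := by
  classical
  haveI : Nonempty {w // w ∈ S} := ⟨⟨hS.choose, hS.choose_spec⟩⟩
  set A : Matrix {w // w ∈ S} {w // w ∈ S} ℚ :=
    fun u v => if (v : V) ∈ N u then ((N (u : V)).card : ℚ)⁻¹ else 0 with hA
  have hAnn : ∀ u v, 0 ≤ A u v := by
    intro u v
    simp only [hA]
    split
    · positivity
    · exact le_refl 0
  -- row sums are 1
  have hrow : ∀ u : {w // w ∈ S}, ∑ v : {w // w ∈ S}, A u v = 1 := by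
    intro u
    have h1 : ∑ v : {w // w ∈ S}, A u v
        = ∑ v ∈ S, (if v ∈ N (u : V) then ((N (u : V)).card : ℚ)⁻¹ else 0) := by
      rw [← Finset.sum_coe_sort S]
    rw [h1, Finset.sum_ite_mem, Finset.inter_eq_right.mpr (hsub u.1 u.2), Finset.sum_const,
      nsmul_eq_mul, mul_inv_cancel₀]
    exact_mod_cast (Finset.card_pos.mpr (hne u.1 u.2)).ne'
  -- kernel vector of A - 1 (all-ones)
  have hker : (A - 1) *ᵥ (fun _ => (1:ℚ)) = 0 := by
    funext u
    simp only [Matrix.mulVec, dotProduct, Matrix.sub_apply, sub_mul, mul_one,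
      Finset.sum_sub_distrib, Pi.zero_apply]
    rw [hrow u]
    simp [Matrix.one_apply]
  have hdet : (A - 1).det = 0 := by
    refine Matrix.exists_mulVec_eq_zero_iff.mp ⟨fun _ => 1, ?_, hker⟩
    intro h
    have := congrFun h (Classical.arbitrary _)
    norm_num at this
  obtain ⟨y, hy0, hyB⟩ := Matrix.exists_vecMul_eq_zero_iff.mpr hdet
  have hyst : ∀ v : {w // w ∈ S}, ∑ u : {w // w ∈ S}, y u * A u v = y v := by
    intro v
    have := congrFun hyB v
    simp only [Matrix.vecMul, dotProduct, Matrix.sub_apply, mul_sub,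
      Finset.sum_sub_distrib, Pi.zero_apply] at this
    have h2 : ∑ u : {w // w ∈ S}, y u * (1 : Matrix _ _ ℚ) u v = y v := by
      simp [Matrix.one_apply]
    rw [h2] at this
    linarith
  -- absolute value is stationary
  set x' : {w // w ∈ S} → ℚ := fun v => |y v| with hx'
  have hle : ∀ v, x' v ≤ ∑ u, x' u * A u v := by
    intro v
    calc x' v = |∑ u, y u * A u v| := by rw [hyst v]
    _ ≤ ∑ u, |y u * A u v| := Finset.abs_sum_le_sum_abs _ _
    _ = ∑ u, x' u * A u v := by
        refine Finset.sum_congr rfl fun u _ => ?_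
        rw [abs_mul, abs_of_nonneg (hAnn u v)]
  have htot : ∑ v, ∑ u, x' u * A u v = ∑ u : {w // w ∈ S}, x' u := by
    rw [Finset.sum_comm]
    refine Finset.sum_congr rfl fun u _ => ?_
    rw [← Finset.mul_sum, hrow u, mul_one]
  have hstat' : ∀ v, ∑ u, x' u * A u v = x' v := by
    have hz : ∀ v ∈ (Finset.univ : Finset {w // w ∈ S}),
        (0:ℚ) ≤ (∑ u, x' u * A u v) - x' v := fun v _ => by linarith [hle v]
    have hzsum : ∑ v, ((∑ u, x' u * A u v) - x' v) = 0 := by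
      rw [Finset.sum_sub_distrib, htot, sub_self]
    intro v
    have := (Finset.sum_eq_zero_iff_of_nonneg hz).mp hzsum v (Finset.mem_univ v)
    linarith
  -- extend to V
  set x : V → ℚ := fun w => if h : w ∈ S then x' ⟨w, h⟩ else 0 with hxdef
  have hxnn : ∀ u, 0 ≤ x u := by
    intro u
    simp only [hxdef]
    split
    · exact abs_nonneg _
    · exact le_refl 0
  have hstat : ∀ v ∈ S, ∑ u ∈ S.filter (fun u => v ∈ N u), x u / (N u).card = x v := by
    intro v hv
    have h1 : ∑ u ∈ S.filter (fun u => v ∈ N u), x u / (N u).card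
        = ∑ u ∈ S, (if v ∈ N u then x u / (N u).card else 0) := by
      rw [Finset.sum_filter]
    have h2 : ∑ u ∈ S, (if v ∈ N u then x u / (N u).card else 0)
        = ∑ u : {w // w ∈ S}, x' u * A ⟨u.1, u.2⟩ ⟨v, hv⟩ := by
      rw [← Finset.sum_coe_sort S (fun u => if v ∈ N u then x u / (N u).card else 0)]
      refine Finset.sum_congr rfl fun u _ => ?_
      simp only [hA, mul_ite, mul_zero]
      by_cases h : v ∈ N (u : V)
      · simp only [if_pos h]
        rw [div_eq_mul_inv]
        congr 1
        simp only [hxdef, dif_pos u.2]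
      · simp only [if_neg h]
    rw [h1, h2]
    have := hstat' ⟨v, hv⟩
    simp only [hxdef, dif_pos hv]
    rw [← this]
  -- positivity
  have hex : ∃ u₀ : {w // w ∈ S}, x' u₀ ≠ 0 := by
    by_contra h
    push_neg at h
    apply hy0
    funext u
    have := h u
    simpa [hx', abs_eq_zero] using this
  obtain ⟨u₀, hu₀⟩ := hex
  have hxu₀ : 0 < x u₀.1 := by
    simp only [hxdef, dif_pos u₀.2]
    exact lt_of_le_of_ne (abs_nonneg _) (Ne.symm hu₀)
  have hprop : ∀ w, Relation.ReflTransGen (fun a b => b ∈ N a) u₀.1 w → (w ∈ S ∧ 0 < x w) := by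
    intro w hw
    induction hw with
    | refl => exact ⟨u₀.2, hxu₀⟩
    | tail hab hbc ih =>
      rename_i b c
      have hcS : c ∈ S := hsub b ih.1 hbc
      refine ⟨hcS, ?_⟩
      rw [← hstat c hcS]
      have hbmem : b ∈ S.filter (fun u => c ∈ N u) := Finset.mem_filter.mpr ⟨ih.1, hbc⟩
      have hterm : 0 < x b / ((N b).card : ℚ) := by
        apply div_pos ih.2
        exact_mod_cast Finset.card_pos.mpr (hne b ih.1)
      calc (0:ℚ) < x b / ((N b).card : ℚ) := hterm
      _ ≤ ∑ u ∈ S.filter (fun u => c ∈ N u), x u / (N u).card := by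
          exact Finset.single_le_sum (f := fun u => x u / ((N u).card : ℚ))
            (fun u _ => div_nonneg (hxnn u) (Nat.cast_nonneg _)) hbmem
  have hxpos : ∀ v ∈ S, 0 < x v := fun v hv => (hprop v (hconn u₀.1 u₀.2 v hv)).2
  exact ⟨x, hxnn, hxpos, hstat⟩


lemma base_case (N : V → Finset V) (g : V → Fin 3 → ℕ) (S : Finset V)
    (hsub : ∀ v ∈ S, N v ⊆ S) (hloop : ∀ v, v ∉ N v)
    (hne : ∀ v ∈ S, (N v).Nonempty)
    (hconn : ∀ u ∈ S, ∀ v ∈ S, Relation.ReflTransGen (fun a b => b ∈ N a) u v)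
    (hS : S.Nonempty) :
    ∃ c : V → Fin 3, ∀ v ∈ S,
      3 * (((N v).filter (fun u => c u = c v)).card + g v (c v))
        ≤ 2 * ((N v).card + ∑ γ : Fin 3, g v γ) := by
  classical
  obtain ⟨x, hxnn, hxpos, hstat⟩ := exists_stationary N S hsub hne hconn hS
  set w : V → ℚ := fun v => x v / (N v).card with hwdef
  have hwnn : ∀ v, 0 ≤ w v := fun v => div_nonneg (hxnn v) (Nat.cast_nonneg _)
  have hwpos : ∀ v ∈ S, 0 < w v := fun v hv => div_pos (hxpos v hv)
    (by exact_mod_cast Finset.card_pos.mpr (hne v hv))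
  set Φ : (V → Fin 3) → ℚ := fun c => ∑ v ∈ S,
    w v * (((((N v).filter (fun u => c u = c v)).card : ℚ)) + 2 * (g v (c v) : ℚ)) with hΦ
  obtain ⟨c, -, hcmin⟩ := Finset.exists_min_image (Finset.univ : Finset (V → Fin 3)) Φ
    Finset.univ_nonempty
  refine ⟨c, fun v hv => ?_⟩
  set sγ : Fin 3 → ℚ := fun γ => (((N v).filter (fun u => c u = γ)).card : ℚ) with hsγ
  set E : Fin 3 → ℚ := fun γ => w v * (sγ γ + 2 * (g v γ : ℚ))
      + ∑ u ∈ S.filter (fun u => v ∈ N u), w u * (if γ = c u then (1:ℚ) else 0) with hE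
  -- key : for all q, Φ (update c v q) - Φ c = E q - E (c v)
  have hkey : ∀ q : Fin 3, Φ (Function.update c v q) - Φ c = E q - E (c v) := by
    intro q
    set c' := Function.update c v q with hc'
    have hc'v : c' v = q := Function.update_self v q c
    have hc'u : ∀ u, u ≠ v → c' u = c u := fun u hu => Function.update_of_ne hu q c
    have hsplit : Φ c' - Φ c = ∑ v' ∈ S,
        (w v' * ((((N v').filter (fun u => c' u = c' v')).card : ℚ) + 2 * (g v' (c' v') : ℚ))
         - w v' * ((((N v').filter (fun u => c u = c v')).card : ℚ) + 2 * (g v' (c v') : ℚ))) := by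
      rw [hΦ, ← Finset.sum_sub_distrib]
    rw [hsplit]
    have hterm : ∀ v' ∈ S,
        (w v' * ((((N v').filter (fun u => c' u = c' v')).card : ℚ) + 2 * (g v' (c' v') : ℚ))
         - w v' * ((((N v').filter (fun u => c u = c v')).card : ℚ) + 2 * (g v' (c v') : ℚ)))
        = (if v' = v then w v * ((sγ q + 2 * (g v q : ℚ)) - (sγ (c v) + 2 * (g v (c v) : ℚ))) else 0)
          + (if v ∈ N v' then w v' * ((if q = c v' then (1:ℚ) else 0) - (if c v = c v' then (1:ℚ) else 0)) else 0) := by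
      intro v' hv'
      by_cases hvv : v' = v
      · subst hvv
        have h1 : (N v').filter (fun u => c' u = c' v') = (N v').filter (fun u => c u = q) := by
          apply Finset.filter_congr
          intro u hu
          rw [hc'v, hc'u u (fun h : u = v' => hloop v' (h ▸ hu))]
        rw [h1, if_pos rfl, if_neg (hloop v'), hc'v, add_zero]
        simp only [hsγ]
        ring
      · -- v' ≠ v
        have hcv' : c' v' = c v' := hc'u v' hvv
        have hg : (g v' (c' v') : ℚ) = (g v' (c v') : ℚ) := by rw [hcv']
        have hcard : (((N v').filter (fun u => c' u = c' v')).card : ℚ)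
            - (((N v').filter (fun u => c u = c v')).card : ℚ)
            = (if v ∈ N v' then (if q = c v' then (1:ℚ) else 0) - (if c v = c v' then (1:ℚ) else 0) else 0) := by
          rw [card_filter_eq_sum_ind, card_filter_eq_sum_ind, ← Finset.sum_sub_distrib]
          have hpt : ∀ u ∈ N v', ((if c' u = c' v' then (1:ℚ) else 0) - (if c u = c v' then (1:ℚ) else 0))
              = (if u = v then ((if q = c v' then (1:ℚ) else 0) - (if c v = c v' then (1:ℚ) else 0)) else 0) := by
            intro u hu
            by_cases huv : u = v
            · subst huv
              rw [if_pos rfl, hc'v, hcv']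
            · rw [if_neg huv, hc'u u huv, hcv', sub_self]
          rw [Finset.sum_congr rfl hpt, Finset.sum_ite_eq' (N v') v]
        by_cases hvm : v ∈ N v'
        · rw [if_pos hvm] at hcard ⊢
          rw [if_neg hvv, zero_add]
          linear_combination (w v') * hcard + 2 * (w v') * hg
        · rw [if_neg hvm] at hcard ⊢
          rw [if_neg hvv, zero_add]
          linear_combination (w v') * hcard + 2 * (w v') * hg
    rw [Finset.sum_congr rfl hterm, Finset.sum_add_distrib]
    have hA : ∑ v' ∈ S, (if v' = v then w v * ((sγ q + 2 * (g v q : ℚ)) - (sγ (c v) + 2 * (g v (c v) : ℚ))) else 0)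
        = w v * ((sγ q + 2 * (g v q : ℚ)) - (sγ (c v) + 2 * (g v (c v) : ℚ))) := by
      rw [Finset.sum_ite_eq' S v, if_pos hv]
    have hB : ∑ v' ∈ S, (if v ∈ N v' then w v' * ((if q = c v' then (1:ℚ) else 0) - (if c v = c v' then (1:ℚ) else 0)) else 0)
        = ∑ u ∈ S.filter (fun u => v ∈ N u), w u * ((if q = c u then (1:ℚ) else 0) - (if c v = c u then (1:ℚ) else 0)) := by
      rw [Finset.sum_filter]
    rw [hA, hB, hE]
    simp only [mul_sub]
    rw [Finset.sum_sub_distrib]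
    ring
  have hEq : ∀ q : Fin 3, E (c v) ≤ E q := by
    intro q
    have h1 := hcmin (Function.update c v q) (Finset.mem_univ _)
    have h2 := hkey q
    linarith
  have hsum3 : 3 * E (c v) ≤ ∑ q : Fin 3, E q := by
    have h := Finset.sum_le_sum (fun q _ => hEq q) (s := (Finset.univ : Finset (Fin 3)))
    have h2 : ∑ _q : Fin 3, E (c v) = 3 * E (c v) := by
      rw [Finset.sum_const]
      simp [mul_comm]
    linarith
  have hEtot : ∑ q : Fin 3, E q
      = w v * (((N v).card : ℚ) + 2 * (∑ γ : Fin 3, (g v γ : ℚ))) + x v := by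
    rw [hE]
    rw [Finset.sum_add_distrib]
    have hA1 : ∑ q : Fin 3, w v * (sγ q + 2 * (g v q : ℚ))
        = w v * (((N v).card : ℚ) + 2 * (∑ γ : Fin 3, (g v γ : ℚ))) := by
      rw [← Finset.mul_sum]
      congr 1
      rw [Finset.sum_add_distrib]
      congr 1
      · rw [hsγ]
        exact sum_card_filter_colors (N v) c
      · rw [← Finset.mul_sum]
    have hA2 : ∑ q : Fin 3, ∑ u ∈ S.filter (fun u => v ∈ N u), w u * (if q = c u then (1:ℚ) else 0)
        = x v := by
      rw [Finset.sum_comm]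
      rw [← hstat v hv]
      refine Finset.sum_congr rfl fun u _ => ?_
      rw [← Finset.mul_sum, Finset.sum_ite_eq' (Finset.univ : Finset (Fin 3)) (c u) (fun _ => (1:ℚ)),
        if_pos (Finset.mem_univ _), mul_one]
    rw [hA1, hA2]
  have hElb : w v * (sγ (c v) + 2 * (g v (c v) : ℚ)) ≤ E (c v) := by
    simp only [hE]
    have hnn : 0 ≤ ∑ u ∈ S.filter (fun u => v ∈ N u), w u * (if (c v) = c u then (1:ℚ) else 0) := by
      refine Finset.sum_nonneg fun u _ => ?_
      refine mul_nonneg (hwnn u) ?_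
      split <;> norm_num
    linarith
  have hxw : x v = w v * ((N v).card : ℚ) := by
    rw [hwdef]
    have hc0 : ((N v).card : ℚ) ≠ 0 := by
      exact_mod_cast (Finset.card_pos.mpr (hne v hv)).ne'
    field_simp
  have hmain : w v * (3 * (sγ (c v) + 2 * (g v (c v) : ℚ)))
      ≤ w v * (2 * ((N v).card : ℚ) + 2 * (∑ γ : Fin 3, (g v γ : ℚ))) := by
    have h1 : 3 * (w v * (sγ (c v) + 2 * (g v (c v) : ℚ))) ≤ ∑ q : Fin 3, E q := by
      calc 3 * (w v * (sγ (c v) + 2 * (g v (c v) : ℚ))) ≤ 3 * E (c v) := by linarith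
      _ ≤ ∑ q : Fin 3, E q := hsum3
    rw [hEtot, hxw] at h1
    linarith
  have hq : 3 * (sγ (c v) + 2 * (g v (c v) : ℚ))
      ≤ 2 * ((N v).card : ℚ) + 2 * (∑ γ : Fin 3, (g v γ : ℚ)) :=
    le_of_mul_le_mul_left hmain (hwpos v hv)
  have hnat : 3 * (((N v).filter (fun u => c u = c v)).card + 2 * g v (c v))
      ≤ 2 * (N v).card + 2 * ∑ γ : Fin 3, g v γ := by
    have : ((3 * (((N v).filter (fun u => c u = c v)).card + 2 * g v (c v)) : ℕ) : ℚ)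
        ≤ ((2 * (N v).card + 2 * ∑ γ : Fin 3, g v γ : ℕ) : ℚ) := by
      push_cast
      rw [hsγ] at hq
      push_cast at hq
      linarith
    exact_mod_cast this
  omega


lemma abstract (n : ℕ) :
    ∀ (N : V → Finset V) (g : V → Fin 3 → ℕ) (S : Finset V),
    S.card ≤ n → (∀ v ∈ S, N v ⊆ S) → (∀ v, v ∉ N v) →
    ∃ c : V → Fin 3, ∀ v ∈ S,
      3 * (((N v).filter (fun u => c u = c v)).card + g v (c v))
        ≤ 2 * ((N v).card + ∑ γ : Fin 3, g v γ) := by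
  classical
  induction n with
  | zero =>
    intro N g S hcard _ _
    have hS : S = ∅ := Finset.card_eq_zero.mp (Nat.le_zero.mp hcard)
    exact ⟨fun _ => 0, by simp [hS]⟩
  | succ n ih =>
    intro N g S hcard hsub hloop
    rcases Finset.eq_empty_or_nonempty S with hSe | hS
    · exact ⟨fun _ => 0, by simp [hSe]⟩
    set R : V → Finset V :=
      fun u => S.filter (fun v' => Relation.ReflTransGen (fun a b => b ∈ N a) u v') with hR
    by_cases hconn : ∀ u ∈ S, R u = S
    · -- strongly connected (or singleton)
      have hreach : ∀ u ∈ S, ∀ v ∈ S, Relation.ReflTransGen (fun a b => b ∈ N a) u v := by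
        intro u hu v hv
        have : v ∈ R u := by rw [hconn u hu]; exact hv
        exact (Finset.mem_filter.mp this).2
      by_cases h1 : S.card = 1
      · obtain ⟨v0, hv0⟩ := Finset.card_eq_one.mp h1
        have hN0 : N v0 = ∅ := by
          rcases Finset.subset_singleton_iff.mp (hv0 ▸ hsub v0 (hv0 ▸ Finset.mem_singleton_self v0)) with h | h
          · exact h
          · exact absurd (h ▸ Finset.mem_singleton_self v0) (hloop v0)
        obtain ⟨γm, -, hγm⟩ := Finset.exists_min_image (Finset.univ : Finset (Fin 3)) (g v0)
          Finset.univ_nonempty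
        refine ⟨fun _ => γm, fun v hv => ?_⟩
        have hveq : v = v0 := by
          rw [hv0] at hv
          exact Finset.mem_singleton.mp hv
        subst hveq
        rw [hN0]
        simp only [Finset.filter_empty, Finset.card_empty, zero_add, Finset.card_empty]
        have h3 : 3 * g v γm ≤ ∑ γ : Fin 3, g v γ := by
          have := Finset.card_nsmul_le_sum (Finset.univ : Finset (Fin 3)) (g v) (g v γm)
            (fun γ _ => hγm γ (Finset.mem_univ γ))
          simpa [smul_eq_mul] using this
        omega
      · have h2 : 1 < S.card := by
          have := Finset.card_pos.mpr hS
          omega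
        have hne : ∀ v ∈ S, (N v).Nonempty := by
          intro v hv
          obtain ⟨u2, hu2, hu2ne⟩ := Finset.exists_mem_ne h2 v
          have hr := hreach v hv u2 hu2
          rcases hr.cases_head with h | ⟨b, hb, -⟩
          · exact absurd h.symm hu2ne
          · exact ⟨b, hb⟩
        exact base_case N g S hsub hloop hne hreach hS
    · -- split off a closed proper subset C
      push_neg at hconn
      obtain ⟨u, huS, hRu⟩ := hconn
      set C := R u with hC
      have hCS : C ⊆ S := Finset.filter_subset _ _
      have hCu : u ∈ C := Finset.mem_filter.mpr ⟨huS, Relation.ReflTransGen.refl⟩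
      have hCne : C.Nonempty := ⟨u, hCu⟩
      have hCclosed : ∀ v ∈ C, N v ⊆ C := by
        intro v hvC w hw
        obtain ⟨hvS, hvr⟩ := Finset.mem_filter.mp hvC
        exact Finset.mem_filter.mpr ⟨hsub v hvS hw, hvr.tail hw⟩
      have hCcard : C.card ≤ n := by
        have : C ⊂ S := ⟨hCS, fun h => hRu (Finset.Subset.antisymm hCS h)⟩
        have := Finset.card_lt_card this
        omega
      have hSCcard : (S \ C).card ≤ n := by
        have h1 : (S \ C).card = S.card - C.card := Finset.card_sdiff_of_subset hCS
        have h2 : 1 ≤ C.card := Finset.card_pos.mpr hCne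
        omega
      obtain ⟨c₁, hc₁⟩ := ih N g C hCcard hCclosed hloop
      set N2 : V → Finset V := fun v => (N v) \ C with hN2
      set g2 : V → Fin 3 → ℕ :=
        fun v γ => g v γ + (((N v) ∩ C).filter (fun u' => c₁ u' = γ)).card with hg2
      have hsub2 : ∀ v ∈ S \ C, N2 v ⊆ S \ C := by
        intro v hv w hw
        obtain ⟨hw1, hw2⟩ := Finset.mem_sdiff.mp hw
        exact Finset.mem_sdiff.mpr ⟨hsub v (Finset.mem_sdiff.mp hv).1 hw1, hw2⟩
      have hloop2 : ∀ v, v ∉ N2 v := fun v h => hloop v (Finset.mem_sdiff.mp h).1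
      obtain ⟨c₂, hc₂⟩ := ih N2 g2 (S \ C) hSCcard hsub2 hloop2
      set c : V → Fin 3 := fun w => if w ∈ C then c₁ w else c₂ w with hc
      refine ⟨c, fun v hv => ?_⟩
      by_cases hvC : v ∈ C
      · -- inside C
        have hcv : c v = c₁ v := if_pos hvC
        have hfil : (N v).filter (fun u' => c u' = c v)
            = (N v).filter (fun u' => c₁ u' = c₁ v) := by
          apply Finset.filter_congr
          intro u' hu'
          have hu'C : u' ∈ C := hCclosed v hvC hu'
          simp only [hc, if_pos hu'C, if_pos hvC]
        rw [hfil, hcv]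
        exact hc₁ v hvC
      · -- outside C
        have hvSC : v ∈ S \ C := Finset.mem_sdiff.mpr ⟨hv, hvC⟩
        have hcv : c v = c₂ v := if_neg hvC
        have hpart : N v = N2 v ∪ ((N v) ∩ C) := by
          rw [hN2]
          ext a
          simp only [Finset.mem_union, Finset.mem_sdiff, Finset.mem_inter]
          tauto
        have hdisj : Disjoint (N2 v) ((N v) ∩ C) := by
          rw [hN2]
          exact Finset.disjoint_left.mpr
            (fun a ha h2 => (Finset.mem_sdiff.mp ha).2 (Finset.mem_inter.mp h2).2)
        -- counts
        have hcount : ((N v).filter (fun u' => c u' = c v)).card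
            = ((N2 v).filter (fun u' => c₂ u' = c₂ v)).card
              + (((N v) ∩ C).filter (fun u' => c₁ u' = c₂ v)).card := by
          conv_lhs => rw [hpart]
          rw [Finset.filter_union, Finset.card_union_of_disjoint
            (Finset.disjoint_filter_filter hdisj)]
          congr 1
          · congr 1
            apply Finset.filter_congr
            intro u' hu'
            have hu'2 : u' ∈ N v \ C := by simpa [hN2] using hu'
            have hu'C : u' ∉ C := (Finset.mem_sdiff.mp hu'2).2
            simp only [hc, if_neg hu'C, if_neg hvC]
          · congr 1
            apply Finset.filter_congr
            intro u' hu'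
            have hu'C : u' ∈ C := (Finset.mem_inter.mp hu').2
            simp only [hc, if_pos hu'C, if_neg hvC]
        have hdeg : (N v).card = (N2 v).card + ((N v) ∩ C).card := by
          conv_lhs => rw [hpart]
          exact Finset.card_union_of_disjoint hdisj
        have hgh : ∑ x : Fin 3, (g v x + (((N v) ∩ C).filter (fun u' => c₁ u' = x)).card)
            = (∑ γ : Fin 3, g v γ) + ((N v) ∩ C).card := by
          rw [Finset.sum_add_distrib]
          congr 1
          exact sum_card_filter_colors_nat ((N v) ∩ C) c₁
        have h2 := hc₂ v hvSC
        rw [hg2] at h2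
        simp only at h2
        rw [hcount, hcv, hdeg]
        omega
  

end Stmt19Aux

/-- Let `D` be a digraph and `(X, Y)` a partition of `V(D)`. Then `D` has a
spanning 3-partite subdigraph `H` (given by a 3-partition `P`, keeping exactly the
arcs between distinct parts) such that `d⁺_H(x) ≥ ⌈d⁺_D(x)/3⌉` for all `x ∈ X`
and `d⁻_H(y) ≥ ⌈d⁻_D(y)/3⌉` for all `y ∈ Y`. -/
theorem stmt19 {V : Type*} [Fintype V] (D : V → V → Prop)
    (hloopless : ∀ v, ¬ D v v)
    (X Y : Set V) (hdisj : Disjoint X Y) (hunion : X ∪ Y = Set.univ) :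
    ∃ P : V → Fin 3,
      (∀ x ∈ X, {w | D x w}.ncard ≤ 3 * {w | D x w ∧ P w ≠ P x}.ncard) ∧
      (∀ y ∈ Y, {w | D w y}.ncard ≤ 3 * {w | D w y ∧ P w ≠ P y}.ncard) := by
  classical
  set N : V → Finset V := fun v =>
    if v ∈ X then Finset.univ.filter (fun w => D v w) else Finset.univ.filter (fun w => D w v)
    with hN
  have hloop : ∀ v, v ∉ N v := by
    intro v
    simp only [hN]
    split <;> simp [hloopless v]
  obtain ⟨P, hP⟩ := Stmt19Aux.abstract (Fintype.card V) N (fun _ _ => 0) Finset.univ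
    (le_of_eq Finset.card_univ) (fun v _ => Finset.subset_univ _) hloop
  have hP' : ∀ v, 3 * ((N v).filter (fun u => P u = P v)).card ≤ 2 * (N v).card := by
    intro v
    have := hP v (Finset.mem_univ v)
    simpa using this
  have key : ∀ (v : V) (T : Finset V), T = N v →
      T.card ≤ 3 * (T.filter (fun w => ¬ (P w = P v))).card := by
    intro v T hT
    have hsplit := Finset.card_filter_add_card_filter_not
      (s := T) (p := fun w => P w = P v)
    have := hP' v
    rw [← hT] at this
    omega
  refine ⟨P, fun x hx => ?_, fun y hy => ?_⟩
  · have hNx : N x = Finset.univ.filter (fun w => D x w) := by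
      simp only [hN, if_pos hx]
    have e1 : {w | D x w}.ncard = (Finset.univ.filter (fun w => D x w)).card := by
      rw [Set.ncard_eq_toFinset_card']
      congr 1
      simp [Set.toFinset_setOf]
    have e2 : {w | D x w ∧ P w ≠ P x}.ncard
        = ((Finset.univ.filter (fun w => D x w)).filter (fun w => ¬ (P w = P x))).card := by
      rw [Set.ncard_eq_toFinset_card']
      congr 1
      simp [Set.toFinset_setOf, Finset.filter_filter]
    rw [e1, e2]
    exact key x (Finset.univ.filter (fun w => D x w)) hNx.symm
  · have hyX : y ∉ X := fun h => Set.disjoint_left.mp hdisj h hy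
    have hNy : N y = Finset.univ.filter (fun w => D w y) := by
      simp only [hN, if_neg hyX]
    have e1 : {w | D w y}.ncard = (Finset.univ.filter (fun w => D w y)).card := by
      rw [Set.ncard_eq_toFinset_card']
      congr 1
      simp [Set.toFinset_setOf]
    have e2 : {w | D w y ∧ P w ≠ P y}.ncard
        = ((Finset.univ.filter (fun w => D w y)).filter (fun w => ¬ (P w = P y))).card := by
      rw [Set.ncard_eq_toFinset_card']
      congr 1
      simp [Set.toFinset_setOf, Finset.filter_filter]
    rw [e1, e2]
    exact key y (Finset.univ.filter (fun w => D w y)) hNy.symm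
end
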